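/- arXiv:math/0606518 — 10 statements merged into one kernel-verified Lean document; each statement's English description precedes it below -/
import Mathlib

section
/- If S is a skew-symmetric integer n×n matrix, then the cokernel of S (as a map Z^n → Z^n) is isomorphic to Z^r ⊕ (Z/m_1 ⊕ Z/m_1) ⊕ ... ⊕ (Z/m_s ⊕ Z/m_s) for some natural number r and positive integers m_1 | m_2 | ... | m_s. -/
/-!
View `S` as the alternating form `ω (v, w) = v ⬝ Sᵀ w` on `ℤⁿ`: the cokernel of `S` is the cokernel
of `ω` seen as a map `ℤⁿ → Dual ℤⁿ`, and we argue on an arbitrary alternating form `ω` on a free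
module `V` of finite rank, by induction on the rank. If `ω ≠ 0`, let `a = ω x y` be its least
positive value. Division with remainder shows that `a` divides `ω x z` and `ω y z` for all `z`, so
`V = ℤ x ⊕ ℤ y ⊕ W` with `W` the `ω`-orthogonal of `x` and `y`, and in this decomposition `ω` is
the orthogonal sum of `a • (standard symplectic form on ℤ²)`, whose cokernel is `(ℤ/a)²`, and of
`ω|W`. Minimality of `a` also makes it divide every value of `ω|W`, so the invariant factors that
the induction produces for `W` are multiples of `a`.
-/

/-- Cokernel of an integer matrix, viewed as the quotient of `ℤ^n` by its image. -/
abbrev cokerG {m : Type} [Fintype m] [DecidableEq m] (S : Matrix m m ℤ) :=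
  (m → ℤ) ⧸ LinearMap.range S.mulVecLin

open Module LinearMap Matrix

noncomputable section

section Quotient

variable {R M N M' N' : Type*} [Ring R] [AddCommGroup M] [AddCommGroup N] [AddCommGroup M']
  [AddCommGroup N'] [Module R M] [Module R N] [Module R M'] [Module R N']

def Submodule.quotientProdEquiv (p : Submodule R M) (q : Submodule R N) :
    ((M × N) ⧸ p.prod q) ≃ₗ[R] (M ⧸ p) × (N ⧸ q) :=
  (Submodule.quotEquivOfEq _ _ (by rw [ker_prodMap, Submodule.ker_mkQ, Submodule.ker_mkQ])).trans
    ((p.mkQ.prodMap q.mkQ).quotKerEquivOfSurjective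
      (Prod.map_surjective.mpr ⟨p.mkQ_surjective, q.mkQ_surjective⟩))

def LinearMap.quotRangeEquivOfComm {f : M →ₗ[R] N} {f' : M' →ₗ[R] N'} (eM : M ≃ₗ[R] M')
    (eN : N ≃ₗ[R] N') (h : f' ∘ₗ eM = eN ∘ₗ f) : (N ⧸ range f) ≃ₗ[R] (N' ⧸ range f') :=
  Submodule.Quotient.equiv _ _ eN <| by
    rw [← range_comp, ← h, range_comp_of_range_eq_top _ eM.range]

def LinearMap.quotRangeProdMapEquiv (f : M →ₗ[R] N) (f' : M' →ₗ[R] N') :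
    ((N × N') ⧸ range (f.prodMap f')) ≃ₗ[R] (N ⧸ range f) × (N' ⧸ range f') :=
  (Submodule.quotEquivOfEq _ _ (range_prodMap f f')).trans (Submodule.quotientProdEquiv _ _)

end Quotient

theorem LinearMap.range_smul_id_eq_span {R : Type*} [CommRing R] (a : R) :
    range (a • LinearMap.id : R →ₗ[R] R) = Ideal.span {a} := by
  ext x
  simp [Ideal.mem_span_singleton', mul_comm, eq_comm]

namespace LinearMap.BilinForm

section Coker

variable {R V V₁ V₂ : Type*} [CommRing R] [AddCommGroup V] [Module R V] [AddCommGroup V₁]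
  [Module R V₁] [AddCommGroup V₂] [Module R V₂]

abbrev coker (ω : LinearMap.BilinForm R V) : Type _ := Dual R V ⧸ range ω

def cokerEquivOfBijective (ω : LinearMap.BilinForm R V) {f : V₁ →ₗ[R] V}
    (hf : Function.Bijective f) : ω.coker ≃ₗ[R] coker (ω.compl₁₂ f f) :=
  let e := LinearEquiv.ofBijective f hf
  quotRangeEquivOfComm e.symm e.dualMap (by ext; simp [e])

def orthSum (ω₁ : LinearMap.BilinForm R V₁) (ω₂ : LinearMap.BilinForm R V₂) :
    LinearMap.BilinForm R (V₁ × V₂) :=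
  (dualProdDualEquivDual R V₁ V₂).toLinearMap ∘ₗ ω₁.prodMap ω₂

@[simp]
theorem orthSum_apply (ω₁ : LinearMap.BilinForm R V₁) (ω₂ : LinearMap.BilinForm R V₂)
    (u v : V₁ × V₂) : orthSum ω₁ ω₂ u v = ω₁ u.1 v.1 + ω₂ u.2 v.2 :=
  rfl

def cokerOrthSumEquiv (ω₁ : LinearMap.BilinForm R V₁) (ω₂ : LinearMap.BilinForm R V₂) :
    coker (orthSum ω₁ ω₂) ≃ₗ[R] ω₁.coker × ω₂.coker :=
  (quotRangeEquivOfComm (.refl R _) (dualProdDualEquivDual R V₁ V₂).symm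
    (by ext <;> simp [orthSum])).trans (quotRangeProdMapEquiv ω₁ ω₂)

variable (R) in
def symplecticDual : (R × R) ≃ₗ[R] Dual R (R × R) :=
  .ofLinearMap
    (mk₂ R (fun u v => u.1 * v.2 - u.2 * v.1)
      (by intros; simp only [Prod.fst_add, Prod.snd_add]; ring)
      (by intros; simp only [Prod.smul_fst, Prod.smul_snd, smul_eq_mul]; ring)
      (by intros; simp only [Prod.fst_add, Prod.snd_add]; ring)
      (by intros; simp only [Prod.smul_fst, Prod.smul_snd, smul_eq_mul]; ring))
    ((applyₗ ((0 : R), (1 : R))).prod (-applyₗ ((1 : R), (0 : R))))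
    (by ext φ : 1; ext <;> simp) (by ext <;> simp)

def symplecticForm (a : R) : LinearMap.BilinForm R (R × R) :=
  (symplecticDual R).toLinearMap ∘ₗ (a • LinearMap.id)

@[simp]
theorem symplecticForm_apply (a : R) (u v : R × R) :
    symplecticForm a u v = a * (u.1 * v.2 - u.2 * v.1) := by
  simp [symplecticForm, symplecticDual]

def cokerSymplecticFormEquiv (a : R) :
    coker (symplecticForm a) ≃ₗ[R] (R ⧸ Ideal.span {a}) × (R ⧸ Ideal.span {a}) :=
  let m : R →ₗ[R] R := a • LinearMap.id
  have hm : range m = Ideal.span {a} := range_smul_id_eq_span a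
  (quotRangeEquivOfComm (f' := m.prodMap m) (.refl R _) (symplecticDual R).symm
      (LinearMap.ext fun u => by simp [m, symplecticForm])).trans
    ((quotRangeProdMapEquiv m m).trans
      ((Submodule.quotEquivOfEq _ _ hm).prodCongr (Submodule.quotEquivOfEq _ _ hm)))

end Coker

section Splitting

variable {R V : Type*} [CommRing R] [AddCommGroup V] [Module R V]
  {ω : LinearMap.BilinForm R V} {x y : V} {a : R}

variable (ω x y) in
def pairCoprod : (R × R) × ↥(ker (ω x) ⊓ ker (ω y)) →ₗ[R] V :=
  ((toSpanSingleton R V x).coprod (toSpanSingleton R V y)).coprod (Submodule.subtype _)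

@[simp]
theorem pairCoprod_apply (u : R × R) (w : ↥(ker (ω x) ⊓ ker (ω y))) :
    pairCoprod ω x y (u, w) = u.1 • x + u.2 • y + w :=
  rfl

variable (hω : ω.IsAlt) (hxy : ω x y = a)
include hω hxy

theorem pairCoprod_injective [IsDomain R] (ha : a ≠ 0) :
    Function.Injective (pairCoprod ω x y) := by
  rw [injective_iff_map_eq_zero]
  rintro ⟨⟨c, d⟩, w, hwx, hwy⟩ h
  have hd : d * a = 0 := by
    simpa [hω.self_eq_zero, hxy, mem_ker.mp hwx] using congrArg (ω x) h
  have hc : c * a = 0 := by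
    simpa [hω.self_eq_zero, ← hω.neg_eq x y, hxy, mem_ker.mp hwy] using congrArg (ω y) h
  obtain rfl : c = 0 := (mul_eq_zero.mp hc).resolve_right ha
  obtain rfl : d = 0 := (mul_eq_zero.mp hd).resolve_right ha
  obtain rfl : w = 0 := by simpa using h
  rfl

theorem pairCoprod_surjective (hx : ∀ z, a ∣ ω x z) (hy : ∀ z, a ∣ ω y z) :
    Function.Surjective (pairCoprod ω x y) := by
  intro z
  obtain ⟨c, hc⟩ := hx z
  obtain ⟨d, hd⟩ := hy z
  have hw : z - c • y + d • x ∈ ker (ω x) ⊓ ker (ω y) := by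
    simp only [Submodule.mem_inf, mem_ker, map_add, map_sub, map_smul, smul_eq_mul, hc, hd, hxy,
      ← hω.neg_eq x y, hω.self_eq_zero, mul_zero, add_zero, sub_zero, mul_neg]
    constructor <;> ring
  exact ⟨((-d, c), ⟨_, hw⟩), by simp only [pairCoprod_apply, neg_smul]; abel⟩

theorem compl₁₂_pairCoprod :
    ω.compl₁₂ (pairCoprod ω x y) (pairCoprod ω x y) =
      orthSum (symplecticForm a) (ω.restrict (ker (ω x) ⊓ ker (ω y))) := by
  refine LinearMap.ext fun ⟨⟨c, d⟩, w, hwx, hwy⟩ =>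
    LinearMap.ext fun ⟨⟨c', d'⟩, w', hwx', hwy'⟩ => ?_
  simp only [compl₁₂_apply, pairCoprod_apply, map_add, map_smul, LinearMap.add_apply, smul_apply,
    smul_eq_mul, hω.self_eq_zero, hxy, ← hω.neg_eq x y, mem_ker.mp hwx', mem_ker.mp hwy',
    hω.isRefl _ _ (mem_ker.mp hwx), hω.isRefl _ _ (mem_ker.mp hwy), orthSum_apply,
    symplecticForm_apply, restrict_apply, domRestrict_apply]
  ring

end Splitting

section MinimalValue

variable {V : Type*} [AddCommGroup V] [Module ℤ V] {ω : LinearMap.BilinForm ℤ V}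

theorem exists_apply_eq_min_pos (hω : ω.IsAlt) (h0 : ω ≠ 0) :
    ∃ (a : ℕ) (x y : V), 0 < a ∧ ω x y = a ∧ ∀ u v, 0 < ω u v → (a : ℤ) ≤ ω u v := by
  have hpos : ∃ k : ℤ, 0 < k ∧ ∃ u v, ω u v = k := by
    obtain ⟨u, v, huv⟩ : ∃ u v, ω u v ≠ 0 := by
      by_contra! h
      exact h0 (ext₂ h)
    rcases huv.lt_or_gt with h | h
    · exact ⟨ω v u, by rw [← hω.neg_eq]; omega, v, u, rfl⟩
    · exact ⟨ω u v, h, u, v, rfl⟩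
  obtain ⟨k, ⟨hk, x, y, rfl⟩, hmin⟩ := Int.exists_least_of_bdd ⟨0, fun _ h => h.1.le⟩ hpos
  exact ⟨(ω x y).toNat, x, y, by omega, by omega,
    fun u v huv => by simpa [hk.le] using hmin _ ⟨huv, u, v, rfl⟩⟩

theorem dvd_apply_of_min_pos {a : ℤ} (ha : 0 < a) (hmin : ∀ u v, 0 < ω u v → a ≤ ω u v)
    {p q : V} (hpq : ω p q = a) (z : V) : a ∣ ω p z := by
  have hrem : ω p (z - (ω p z / a) • q) = ω p z % a := by
    rw [map_sub, map_zsmul, hpq, smul_eq_mul, Int.emod_def, mul_comm]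
  rw [Int.dvd_iff_emod_eq_zero]
  by_contra hne
  have := hmin p _ (by rw [hrem]; have := Int.emod_nonneg (ω p z) ha.ne'; omega)
  have := Int.emod_lt_of_pos (ω p z) ha
  omega

end MinimalValue

def cokerSymplecticFormEquivZMod (a : ℕ) : coker (symplecticForm (a : ℤ)) ≃+ ZMod a × ZMod a :=
  (cokerSymplecticFormEquiv (a : ℤ)).toAddEquiv.trans
    ((Int.quotientSpanNatEquivZMod a).toAddEquiv.prodCongr
      (Int.quotientSpanNatEquivZMod a).toAddEquiv)

end LinearMap.BilinForm

def HasPairedInvariantFactors (G : Type*) [AddCommGroup G] (d : ℕ) : Prop :=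
  ∃ (r s : ℕ) (m : Fin s → ℕ), (∀ i, 0 < m i) ∧ (∀ i j : Fin s, i ≤ j → m i ∣ m j) ∧
    (∀ i, d ∣ m i) ∧ Nonempty (G ≃+ (Fin r → ℤ) × ∀ i : Fin s, ZMod (m i) × ZMod (m i))

theorem hasPairedInvariantFactors_pi (r d : ℕ) : HasPairedInvariantFactors (Fin r → ℤ) d :=
  ⟨r, 0, Fin.elim0, (·.elim0), (·.elim0), (·.elim0), ⟨AddEquiv.prodUnique.symm⟩⟩

namespace HasPairedInvariantFactors

variable {G H : Type*} [AddCommGroup G] [AddCommGroup H] {d : ℕ}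

theorem of_addEquiv (h : HasPairedInvariantFactors H d) (e : G ≃+ H) :
    HasPairedInvariantFactors G d :=
  let ⟨r, s, m, hpos, hchain, hdvd, ⟨e'⟩⟩ := h
  ⟨r, s, m, hpos, hchain, hdvd, ⟨e.trans e'⟩⟩

theorem zmod_prod {a : ℕ} (h : HasPairedInvariantFactors G a) (ha : 0 < a) (hd : d ∣ a) :
    HasPairedInvariantFactors ((ZMod a × ZMod a) × G) d := by
  obtain ⟨r, s, m, hpos, hchain, hdvd, ⟨e⟩⟩ := h
  refine ⟨r, s + 1, Fin.cons a m, Fin.cases ha hpos, ?_, Fin.cases hd (hd.trans <| hdvd ·),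
    ⟨(AddEquiv.prodCongr (.refl _) e).trans ?_⟩⟩
  · intro i j hij
    induction i using Fin.cases with
    | zero => exact Fin.cases (dvd_refl a) hdvd j
    | succ i =>
      induction j using Fin.cases with
      | zero => exact absurd hij (by simp)
      | succ j => exact hchain i j (Fin.succ_le_succ_iff.mp hij)
  · exact AddEquiv.prodAssoc.symm.trans <| (AddEquiv.prodComm.prodCongr (.refl _)).trans <|
      AddEquiv.prodAssoc.trans <| AddEquiv.prodCongr (.refl _)
        (Fin.consLinearEquiv ℤ fun i => ZMod ((Fin.cons a m : Fin (s + 1) → ℕ) i) ×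
          ZMod ((Fin.cons a m : Fin (s + 1) → ℕ) i)).toAddEquiv

end HasPairedInvariantFactors

section

-- Otherwise instance search puts this `ℤ`-module structure on products and submodules, and
-- it does not match the one `finrank` and the induction hypothesis are stated with.
attribute [-instance] AddCommGroup.toIntModule

open LinearMap.BilinForm in
theorem hasPairedInvariantFactors_coker (V : Type*) [AddCommGroup V] [Module ℤ V]
    [Module.Free ℤ V] [Module.Finite ℤ V] (ω : LinearMap.BilinForm ℤ V) (hω : ω.IsAlt) (d : ℕ)
    (hd : ∀ u v, (d : ℤ) ∣ ω u v) : HasPairedInvariantFactors ω.coker d := by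
  induction h : finrank ℤ V using Nat.strong_induction_on generalizing V d with
  | _ N IH =>
  obtain rfl | h0 := eq_or_ne ω 0
  · exact (hasPairedInvariantFactors_pi _ d).of_addEquiv
      ((Submodule.quotEquivOfEqBot _ range_zero).trans (finBasis ℤ (Dual ℤ V)).equivFun).toAddEquiv
  obtain ⟨a, x, y, ha, hxy, hmin⟩ := exists_apply_eq_min_pos hω h0
  have hx := dvd_apply_of_min_pos (by omega) hmin hxy
  have hy := dvd_apply_of_min_pos (by omega) hmin (q := -x)
    (by rw [map_neg, ← hω.neg_eq, hxy, neg_neg])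
  have hW : ∀ w z : ↥(ker (ω x) ⊓ ker (ω y)), (a : ℤ) ∣ ω.restrict _ w z := by
    rintro ⟨w, hwx, -⟩ z
    -- `y + w` pairs with `-x` to the minimal value `a`, just as `y` does.
    have h := dvd_apply_of_min_pos (by omega) hmin (p := y + w) (q := -x)
      (by rw [map_neg, ← hω.neg_eq, map_add, hxy, mem_ker.mp hwx, add_zero, neg_neg]) z
    rw [map_add, LinearMap.add_apply] at h
    simpa using (dvd_add_right (hy z)).mp h
  have hbij : Function.Bijective (pairCoprod ω x y) :=
    ⟨pairCoprod_injective hω hxy (by omega), pairCoprod_surjective hω hxy hx hy⟩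
  have hrank : finrank ℤ ↥(ker (ω x) ⊓ ker (ω y)) < N := by
    rw [← h, ← (LinearEquiv.ofBijective _ hbij).finrank_eq, finrank_prod, finrank_prod,
      finrank_self]
    omega
  refine ((IH _ hrank _ (ω.restrict _) (fun w => hω.self_eq_zero w) a hW rfl).zmod_prod ha
    (by exact_mod_cast hxy ▸ hd x y)).of_addEquiv ?_
  exact ((cokerEquivOfBijective ω hbij).trans ((Submodule.quotEquivOfEq _ _
    (congrArg range (compl₁₂_pairCoprod hω hxy))).trans (cokerOrthSumEquiv _ _))).toAddEquiv.trans
    ((cokerSymplecticFormEquivZMod a).prodCongr (.refl _))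

end

section Matrix

variable {ι R : Type*} [Fintype ι] [DecidableEq ι] [CommRing R]

open LinearMap.BilinForm

def Matrix.cokerMulVecLinEquiv (A : Matrix ι ι R) :
    ((ι → R) ⧸ range A.mulVecLin) ≃ₗ[R] coker (toBilin' Aᵀ) :=
  quotRangeEquivOfComm (.refl R _) (Module.piEquiv ι R R) <| by
    refine LinearMap.ext fun v => LinearMap.ext fun w => ?_
    simp only [LinearMap.comp_apply, LinearEquiv.coe_coe, LinearEquiv.refl_apply, toBilin'_apply',
      dotProduct_mulVec, vecMul_transpose, Module.piEquiv_apply_apply, mulVecLin_apply]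
    simp [dotProduct, mul_comm]

theorem Matrix.isAlt_toBilin' [NoZeroDivisors R] [CharZero R] {A : Matrix ι ι R}
    (hA : Aᵀ = -A) : (toBilin' A).IsAlt := fun v => by
  refine self_eq_neg.mp ?_
  conv_lhs => rw [toBilin'_apply', dotProduct_mulVec, ← mulVec_transpose, hA]
  rw [toBilin'_apply', neg_mulVec, neg_dotProduct, dotProduct_comm]

end Matrix

end

/-- The cokernel of a skew-symmetric integer matrix is
`ℤ^r ⊕ (ℤ/m₁ ⊕ ℤ/m₁) ⊕ ⋯ ⊕ (ℤ/m_s ⊕ ℤ/m_s)` with `m₁ ∣ m₂ ∣ ⋯ ∣ m_s`. -/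
theorem skew_symmetric_coker_structure (n : ℕ) (S : Matrix (Fin n) (Fin n) ℤ)
    (hS : S.transpose = -S) :
    ∃ (r s : ℕ) (m : Fin s → ℕ),
      (∀ i, 0 < m i) ∧
      (∀ i j : Fin s, i ≤ j → m i ∣ m j) ∧
      Nonempty (cokerG S ≃+ ((Fin r → ℤ) × (∀ i : Fin s, ZMod (m i) × ZMod (m i)))) := by
  have hSt : Sᵀᵀ = -Sᵀ := by rw [hS, transpose_neg, hS]
  obtain ⟨r, s, m, hpos, hchain, -, ⟨e⟩⟩ := hasPairedInvariantFactors_coker (Fin n → ℤ)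
    (toBilin' Sᵀ) (isAlt_toBilin' hSt) 1 (fun _ _ => one_dvd _)
  exact ⟨r, s, m, hpos, hchain, ⟨S.cokerMulVecLinEquiv.toAddEquiv.trans e⟩⟩
end

section
/- Let B be a nilpotent integer n×n matrix and C = I + B + B^2 + ... (a finite sum). Then C is invertible over Z with C^{-1} = I - B, and (C^{-T} - C^{-1}) C^T = (B - B^T) C^T; consequently, setting Φ = -C^{-1} C^T, one has coker(1 + Φ) ≅ coker(B - B^T). -/
/-- If `B` is nilpotent and `C = 1 + B + B² + ⋯` (a finite sum), then `C` is invertible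
over `ℤ` with inverse `1 - B`, the identity `(C⁻ᵀ - C⁻¹)Cᵀ = (B - Bᵀ)Cᵀ` holds, and
`coker(1 + Φ) ≅ coker(B - Bᵀ)` where `Φ = -C⁻¹Cᵀ = -(1 - B)Cᵀ`. -/
theorem coker_coxeter_of_nilpotent (n k : ℕ) (B : Matrix (Fin n) (Fin n) ℤ)
    (hB : B ^ k = 0) (C : Matrix (Fin n) (Fin n) ℤ)
    (hC : C = ∑ i ∈ Finset.range k, B ^ i) :
    C * (1 - B) = 1 ∧ (1 - B) * C = 1 ∧
    ((1 - B).transpose - (1 - B)) * C.transpose = (B - B.transpose) * C.transpose ∧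
    Nonempty (cokerG (1 + -((1 - B) * C.transpose)) ≃+ cokerG (B - B.transpose)) := by
  have h1 : C * (1 - B) = 1 := by
    have h := geom_sum_mul B k
    rw [← hC] at h
    have h2 : C * (1 - B) = -(C * (B - 1)) := by noncomm_ring
    rw [h2, h, hB]; simp
  have h2 : (1 - B) * C = 1 := by
    have h := mul_geom_sum B k
    rw [← hC] at h
    have h2 : (1 - B) * C = -((B - 1) * C) := by noncomm_ring
    rw [h2, h, hB]; simp
  refine ⟨h1, h2, ?_, ?_⟩
  · congr 1
    simp [Matrix.transpose_sub, Matrix.transpose_one]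
  · -- key: 1 + -((1-B) * Cᵀ) = (B - Bᵀ) * Cᵀ
    have hT : (1 - B.transpose) * C.transpose = 1 := by
      have := congrArg Matrix.transpose h1
      simpa [Matrix.transpose_mul, Matrix.transpose_sub, Matrix.transpose_one] using this
    have hT2 : C.transpose * (1 - B.transpose) = 1 := by
      have := congrArg Matrix.transpose h2
      simpa [Matrix.transpose_mul, Matrix.transpose_sub, Matrix.transpose_one] using this
    have key : 1 + -((1 - B) * C.transpose) = (B - B.transpose) * C.transpose := by
      have : (B - B.transpose) * C.transpose
          = (1 - B.transpose) * C.transpose - (1 - B) * C.transpose := by noncomm_ring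
      rw [this, hT]; noncomm_ring
    rw [key]
    -- ranges equal since Cᵀ.mulVecLin is surjective
    have hsurj : Function.Surjective (C.transpose.mulVecLin) := by
      intro y
      refine ⟨(1 - B.transpose).mulVecLin y, ?_⟩
      rw [Matrix.mulVecLin_apply, Matrix.mulVecLin_apply, Matrix.mulVec_mulVec, hT2,
        Matrix.one_mulVec]
    have hrange : LinearMap.range ((B - B.transpose) * C.transpose).mulVecLin
        = LinearMap.range (B - B.transpose).mulVecLin := by
      rw [Matrix.mulVecLin_mul, LinearMap.range_comp,
        LinearMap.range_eq_top.mpr hsurj, Submodule.map_top]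
    exact ⟨(Submodule.quotEquivOfEq _ _ hrange).toAddEquiv⟩
end

section
/- Let Q be a finite quiver without oriented cycles, B_Q its adjacency matrix, C = (I - B_Q)^{-1} its Cartan matrix, and Φ = -C^{-1} C^T the Coxeter matrix. Then coker(1 + Φ) ≅ coker(B_Q - B_Q^T) as abelian groups. -/
open Matrix

-- Lemma A: nonzero entry of B^k gives a path
lemma pathA {n : ℕ} (B : Matrix (Fin n) (Fin n) ℕ) :
    ∀ (k : ℕ) (i j : Fin n), (B ^ k) i j ≠ 0 →
      ∃ f : ℕ → Fin n, f 0 = i ∧ f k = j ∧ ∀ t < k, B (f t) (f (t + 1)) ≠ 0 := by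
  intro k
  induction k with
  | zero =>
    intro i j h
    refine ⟨fun _ => i, rfl, ?_, by omega⟩
    simp [Matrix.one_apply] at h
    simp [h]
  | succ k ih =>
    intro i j h
    rw [pow_succ, Matrix.mul_apply] at h
    obtain ⟨m, -, hm⟩ := Finset.exists_ne_zero_of_sum_ne_zero h
    have h1 : (B ^ k) i m ≠ 0 := fun h0 => hm (by simp [h0])
    have h2 : B m j ≠ 0 := fun h0 => hm (by simp [h0])
    obtain ⟨f, hf0, hfk, hfs⟩ := ih i m h1
    refine ⟨fun t => if t ≤ k then f t else j, by simpa using hf0, by simp, ?_⟩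
    intro t ht
    rcases Nat.lt_or_ge t k with h' | h'
    · simpa [Nat.le_of_lt h', Nat.succ_le_of_lt h'] using hfs t h'
    · have : t = k := by omega
      subst this
      simpa [hfk] using h2

-- Lemma B: a path gives a nonzero entry
lemma pathB {n : ℕ} (B : Matrix (Fin n) (Fin n) ℕ) :
    ∀ (k : ℕ) (f : ℕ → Fin n), (∀ t < k, B (f t) (f (t + 1)) ≠ 0) →
      (B ^ k) (f 0) (f k) ≠ 0 := by
  intro k
  induction k with
  | zero => intro f _; simp [Matrix.one_apply]
  | succ k ih =>
    intro f hf
    have h1 := ih f (fun t ht => hf t (by omega))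
    have h2 := hf k (by omega)
    rw [pow_succ, Matrix.mul_apply]
    intro h0
    rw [Finset.sum_eq_zero_iff] at h0
    have := h0 (f k) (Finset.mem_univ _)
    rcases Nat.mul_eq_zero.mp this with h | h
    · exact h1 h
    · exact h2 h

lemma nocycle_aux {n : ℕ} (B : Matrix (Fin n) (Fin n) ℕ)
    (hacyclic : ∀ (i : Fin n) (k : ℕ), 0 < k → (B ^ k) i i = 0)
    (f : ℕ → Fin n) (hfs : ∀ t < n, B (f t) (f (t + 1)) ≠ 0)
    (a b : ℕ) (hab : a < b) (hbn : b ≤ n) (heq : f a = f b) : False := by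
  set g : ℕ → Fin n := fun t => f (a + t) with hg
  have hpath : ∀ t < b - a, B (g t) (g (t + 1)) ≠ 0 := by
    intro t ht
    have h1 : a + t < n := by omega
    simpa [hg, Nat.add_assoc] using hfs (a + t) h1
  have hkey := pathB B (b - a) g hpath
  have hgb : g (b - a) = f b := by simp only [hg]; congr 1; omega
  have hg0 : g 0 = f b := by simpa [hg] using heq
  rw [hgb, hg0] at hkey
  exact hkey (hacyclic (f b) (b - a) (by omega))

lemma Bpow_eq_zero {n : ℕ} (B : Matrix (Fin n) (Fin n) ℕ)
    (hacyclic : ∀ (i : Fin n) (k : ℕ), 0 < k → (B ^ k) i i = 0) : B ^ n = 0 := by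
  ext i j
  by_contra h
  obtain ⟨f, hf0, hfn, hfs⟩ := pathA B n i j h
  have hcard : Fintype.card (Fin n) < Fintype.card (Fin (n + 1)) := by simp
  obtain ⟨a, b, hab, heq⟩ :=
    Fintype.exists_ne_map_eq_of_card_lt (fun t : Fin (n + 1) => f t) hcard
  have hv : (a : ℕ) ≠ (b : ℕ) := fun h' => hab (Fin.ext h')
  rcases hv.lt_or_gt with h' | h'
  · exact nocycle_aux B hacyclic f hfs a b h' (by omega) heq
  · exact nocycle_aux B hacyclic f hfs b a h' (by omega) heq.symm

/-- For a finite quiver without oriented cycles, with adjacency matrix `B` (number of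
arrows from `i` to `j`), Cartan matrix `C = (1 - B)⁻¹` and Coxeter matrix
`Φ = -C⁻¹Cᵀ`, we have `coker(1 + Φ) ≅ coker(B - Bᵀ)`. Acyclicity is expressed by
saying that there is no nontrivial path from a vertex to itself. -/
theorem coker_coxeter_eq_coker_skew_adjacency (n : ℕ) (B : Matrix (Fin n) (Fin n) ℕ)
    (hacyclic : ∀ (i : Fin n) (k : ℕ), 0 < k → (B ^ k) i i = 0) :
    Nonempty
      (cokerG (1 + -((((1 - B.map (Nat.cast : ℕ → ℤ))⁻¹)⁻¹) *
          ((1 - B.map (Nat.cast : ℕ → ℤ))⁻¹).transpose)) ≃+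
        cokerG (B.map (Nat.cast : ℕ → ℤ) - (B.map (Nat.cast : ℕ → ℤ)).transpose)) := by
  set N : Matrix (Fin n) (Fin n) ℤ := B.map (Nat.cast : ℕ → ℤ) with hN
  have hnil : IsNilpotent N := by
    refine ⟨n, ?_⟩
    have h1 : N ^ n = (Nat.castRingHom ℤ).mapMatrix (B ^ n) := (map_pow ((Nat.castRingHom ℤ).mapMatrix) B n).symm
    rw [h1, Bpow_eq_zero B hacyclic, map_zero]
  have hU : IsUnit (1 - N) := hnil.isUnit_one_sub
  have hdet : IsUnit (1 - N).det := (Matrix.isUnit_iff_isUnit_det _).mp hU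
  have hCinv : ((1 - N)⁻¹)⁻¹ = 1 - N := Matrix.nonsing_inv_nonsing_inv _ hdet
  have hdetT : IsUnit ((1 - N)ᵀ).det := by rw [Matrix.det_transpose]; exact hdet
  -- key identity : 1 + -((1-N) * ((1-N)⁻¹)ᵀ) = (N - Nᵀ) * ((1-N)⁻¹)ᵀ
  have hkey : 1 + -(((1 - N)⁻¹)⁻¹ * ((1 - N)⁻¹)ᵀ) = (N - Nᵀ) * ((1 - N)⁻¹)ᵀ := by
    rw [hCinv, Matrix.transpose_nonsing_inv]
    have h1 : (1 - N)ᵀ * ((1 - N)ᵀ)⁻¹ = 1 := Matrix.mul_nonsing_inv _ hdetT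
    have h2 : (N - Nᵀ) + (1 - N) = (1 - N)ᵀ := by
      rw [Matrix.transpose_sub, Matrix.transpose_one]; abel
    have h3 : (N - Nᵀ) * ((1 - N)ᵀ)⁻¹
        = ((N - Nᵀ) + (1 - N)) * ((1 - N)ᵀ)⁻¹ - (1 - N) * ((1 - N)ᵀ)⁻¹ := by
      rw [add_mul]; abel
    rw [h3, h2, h1]; abel
  -- ranges agree
  have hsurj : Function.Surjective (((1 - N)ᵀ)⁻¹).mulVecLin := by
    intro y
    refine ⟨(1 - N)ᵀ.mulVec y, ?_⟩
    rw [Matrix.mulVecLin_apply, Matrix.mulVec_mulVec, Matrix.nonsing_inv_mul _ hdetT,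
      Matrix.one_mulVec]
  have hrange : LinearMap.range ((N - Nᵀ) * ((1 - N)ᵀ)⁻¹).mulVecLin
      = LinearMap.range (N - Nᵀ).mulVecLin := by
    rw [Matrix.mulVecLin_mul]
    exact LinearMap.range_comp_of_range_eq_top _ (LinearMap.range_eq_top.mpr hsurj)
  have hkey2 : (1 + -(((1 - N)⁻¹)⁻¹ * ((1 - N)⁻¹)ᵀ)) = (N - Nᵀ) * ((1 - N)ᵀ)⁻¹ := by
    rw [hkey, Matrix.transpose_nonsing_inv]
  exact ⟨(Submodule.quotEquivOfEq _ _ (by rw [hkey2, hrange])).toAddEquiv⟩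
end

section
/- Let Q be a finite quiver and α : v → w a source-arrow (v is a source and α is the unique arrow starting at v). Let Q' = Q_{-α} be the quiver obtained by deleting vertices v and w and all arrows incident to them. Then coker(B_Q - B_Q^T) ≅ coker(B_{Q'} - B_{Q'}^T) as Z-modules. -/
theorem coker_aux (n : ℕ) (S : Matrix (Fin (n + 2)) (Fin (n + 2)) ℤ)
    (h00 : S 0 0 = 0) (h01 : S 0 1 = 1) (h0j : ∀ j : Fin n, S 0 j.succ.succ = 0)
    (h10 : S 1 0 = -1) (h11 : S 1 1 = 0) (hj0 : ∀ j : Fin n, S j.succ.succ 0 = 0) :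
    Nonempty (cokerG S ≃+
      cokerG (S.submatrix (fun i : Fin n => i.succ.succ) (fun i : Fin n => i.succ.succ))) := by
  set S' := S.submatrix (fun i : Fin n => i.succ.succ) (fun i : Fin n => i.succ.succ) with hS'def
  have hsum : ∀ F : Fin (n + 2) → ℤ,
      (∑ j, F j) = F 0 + (F 1 + ∑ j : Fin n, F j.succ.succ) := by
    intro F
    rw [Fin.sum_univ_succ, Fin.sum_univ_succ, Fin.succ_zero_eq_one]
  have hmv0 : ∀ z : Fin (n + 2) → ℤ, S.mulVec z 0 = z 1 := by
    intro z
    simp [Matrix.mulVec, dotProduct, hsum, h00, h01, h0j]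
  have hmv1 : ∀ z : Fin (n + 2) → ℤ,
      S.mulVec z 1 = S 1 0 * z 0 + ∑ j : Fin n, S 1 j.succ.succ * z j.succ.succ := by
    intro z
    simp [Matrix.mulVec, dotProduct, hsum, h11]
  have hmv2 : ∀ (z : Fin (n + 2) → ℤ) (i : Fin n),
      S.mulVec z i.succ.succ
        = S i.succ.succ 1 * z 1 + S'.mulVec (fun j => z j.succ.succ) i := by
    intro z i
    simp [Matrix.mulVec, dotProduct, hsum, hj0, hS'def]
  -- the forward and backward linear maps on ℤ^(n+2) and ℤ^n
  let c : Fin n → ℤ := fun j => S j.succ.succ 1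
  let f : (Fin (n + 2) → ℤ) →ₗ[ℤ] (Fin n → ℤ) :=
    { toFun := fun x j => x j.succ.succ - x 0 * c j
      map_add' := by intro x y; funext j; simp; ring
      map_smul' := by intro a x; funext j; simp; ring }
  let g : (Fin n → ℤ) →ₗ[ℤ] (Fin (n + 2) → ℤ) :=
    { toFun := fun y => Matrix.vecCons 0 (Matrix.vecCons 0 y)
      map_add' := by
        intro x y; funext i
        refine Fin.cases ?_ (fun i1 => ?_) i
        · simp
        · refine Fin.cases ?_ (fun i2 => ?_) i1 <;> simp
      map_smul' := by
        intro a x; funext i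
        refine Fin.cases ?_ (fun i1 => ?_) i
        · simp
        · refine Fin.cases ?_ (fun i2 => ?_) i1 <;> simp }
  have hfg : ∀ y : Fin n → ℤ, f (g y) = y := by
    intro y; funext j
    simp [f, g]
  have hA : LinearMap.range S.mulVecLin ≤
      Submodule.comap f (LinearMap.range S'.mulVecLin) := by
    rintro x ⟨z, rfl⟩
    refine ⟨fun j => z j.succ.succ, ?_⟩
    funext i
    simp only [Matrix.mulVecLin_apply, f, LinearMap.coe_mk, AddHom.coe_mk]
    rw [hmv2, hmv0]
    simp [c]; ring
  have hB : LinearMap.range S'.mulVecLin ≤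
      Submodule.comap g (LinearMap.range S.mulVecLin) := by
    rintro y ⟨w, rfl⟩
    refine ⟨Matrix.vecCons (∑ j : Fin n, S 1 j.succ.succ * w j) (Matrix.vecCons 0 w), ?_⟩
    simp only [Matrix.mulVecLin_apply]
    funext i
    refine Fin.cases ?_ (fun i1 => ?_) i
    · rw [hmv0]; simp [g]
    · refine Fin.cases ?_ (fun i2 => ?_) i1
      · rw [Fin.succ_zero_eq_one, hmv1, h10]
        simp [g]
      · rw [hmv2]
        simp [g]
  have hC : ∀ x : Fin (n + 2) → ℤ,
      g (f x) - x ∈ LinearMap.range S.mulVecLin := by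
    intro x
    have : x - g (f x) ∈ LinearMap.range S.mulVecLin := by
      refine ⟨Matrix.vecCons (-(x 1)) (Matrix.vecCons (x 0) 0), ?_⟩
      simp only [Matrix.mulVecLin_apply]
      funext i
      refine Fin.cases ?_ (fun i1 => ?_) i
      · rw [hmv0]; simp [g, f]
      · refine Fin.cases ?_ (fun i2 => ?_) i1
        · rw [Fin.succ_zero_eq_one, hmv1, h10]
          simp [g, f]
        · rw [hmv2]
          simp [g, f, c, Matrix.mulVec, dotProduct]
          ring
    simpa using neg_mem this
  let F := Submodule.mapQ (LinearMap.range S.mulVecLin) (LinearMap.range S'.mulVecLin) f hA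
  let G := Submodule.mapQ (LinearMap.range S'.mulVecLin) (LinearMap.range S.mulVecLin) g hB
  refine ⟨(LinearEquiv.ofLinear F G ?_ ?_).toAddEquiv⟩
  · apply Submodule.linearMap_qext
    refine LinearMap.ext fun y => ?_
    simp [F, G, Submodule.mapQ_apply, hfg]
  · apply Submodule.linearMap_qext
    refine LinearMap.ext fun x => ?_
    simp only [F, G, LinearMap.comp_apply, Submodule.mkQ_apply, Submodule.mapQ_apply,
      LinearMap.id_apply]
    exact (Submodule.Quotient.eq _).mpr (hC x)

/-- Let `Q` be a finite quiver (given by its adjacency matrix `B` of arrow counts),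
with vertices `0 = v` and `1 = w`, where `α : v → w` is a source-arrow: `v` is a
source (no arrows into `v`) and `α` is the unique arrow starting at `v`.  Let `Q'` be
the quiver obtained by deleting `v` and `w` and all incident arrows (the submatrix on
the remaining vertices).  Then `coker(B_Q - B_Qᵀ) ≅ coker(B_{Q'} - B_{Q'}ᵀ)`. -/
theorem coker_skew_adjacency_cut_source_arrow (n : ℕ)
    (B : Matrix (Fin (n + 2)) (Fin (n + 2)) ℕ)
    (harrow : B 0 1 = 1)
    (hunique : ∀ j : Fin (n + 2), j ≠ 1 → B 0 j = 0)
    (hsource : ∀ j : Fin (n + 2), B j 0 = 0) :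
    Nonempty
      (cokerG (B.map (Nat.cast : ℕ → ℤ) - (B.map (Nat.cast : ℕ → ℤ)).transpose) ≃+
        cokerG ((B.submatrix (fun i : Fin n => i.succ.succ) (fun i : Fin n => i.succ.succ)).map
            (Nat.cast : ℕ → ℤ) -
          ((B.submatrix (fun i : Fin n => i.succ.succ) (fun i : Fin n => i.succ.succ)).map
            (Nat.cast : ℕ → ℤ)).transpose)) := by
  set S := B.map (Nat.cast : ℕ → ℤ) - (B.map (Nat.cast : ℕ → ℤ)).transpose with hSdef
  have hS : ∀ i j, S i j = (B i j : ℤ) - (B j i : ℤ) := by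
    intro i j; simp [hSdef]
  have hne1 : ∀ j : Fin n, j.succ.succ ≠ (1 : Fin (n + 2)) := by
    intro j h
    have := congrArg Fin.val h
    simp [Fin.val_succ] at this
  have key := coker_aux n S
    (by rw [hS]; ring)
    (by rw [hS, harrow, hsource 1]; ring)
    (by intro j; rw [hS, hunique _ (hne1 j), hsource]; ring)
    (by rw [hS, harrow, hsource 1]; ring)
    (by rw [hS]; ring)
    (by intro j; rw [hS, hunique _ (hne1 j), hsource]; ring)
  have heq : (B.submatrix (fun i : Fin n => i.succ.succ) (fun i : Fin n => i.succ.succ)).map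
        (Nat.cast : ℕ → ℤ) -
      ((B.submatrix (fun i : Fin n => i.succ.succ) (fun i : Fin n => i.succ.succ)).map
        (Nat.cast : ℕ → ℤ)).transpose
      = S.submatrix (fun i : Fin n => i.succ.succ) (fun i : Fin n => i.succ.succ) := by
    ext i j
    simp [hS]
  rw [heq]
  exact key
end

section
/- If Q is a finite quiver whose underlying graph is a tree with n vertices, then coker(B_Q - B_Q^T) is a free abelian group (of rank n - 2k where k is the maximal number of edges in a matching reduction by repeatedly cutting off leaf-edges). -/
namespace SimpleGraph

theorem IsAcyclic.exists_adj_forall_adj_eq {V : Type*} [Finite V] {G : SimpleGraph V}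
    (hG : G.IsAcyclic) {a b : V} (hab : G.Adj a b) :
    ∃ u v, G.Adj u v ∧ ∀ w, G.Adj v w → w = u := by
  have : Nonempty V := ⟨a⟩
  -- the last edge of a longest path ends in a leaf
  obtain ⟨x, y, p, hp, hmax⟩ := Walk.exists_isPath_forall_isPath_length_le_length G
  have hnil : ¬p.Nil := fun h => by
    have := hmax a b hab.toWalk (by simp [hab.ne])
    simp [Walk.length_eq_zero_iff.mpr h] at this
  refine ⟨p.penultimate, y, p.adj_penultimate hnil, fun w hyw => ?_⟩
  refine hG.eq_penultimate_of_adj_end hp hyw (by_contra fun hw => ?_)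
  have := hmax _ _ (p.concat hyw) (hp.concat hw hyw)
  simp at this

end SimpleGraph

open Submodule

section

variable {R : Type*} [CommRing R]

theorem nonempty_quotient_span_sup_equiv_of_isUnit {X : Type*} (g : X → R) {v : X}
    (hg : IsUnit (g v)) (L : Submodule R (X → R)) (hL : ∀ y ∈ L, y v = 0) :
    Nonempty (((X → R) ⧸ (span R {g} ⊔ L)) ≃ₗ[R]
      (({x // x ≠ v} → R) ⧸ L.map (LinearMap.funLeft R R Subtype.val))) := by
  classical
  obtain ⟨c, hc⟩ := hg
  set r : (X → R) →ₗ[R] ({x // x ≠ v} → R) := LinearMap.funLeft R R Subtype.val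
  -- `T` projects onto the vectors vanishing at `v`, along `g`.
  set T : (X → R) →ₗ[R] (X → R) :=
    LinearMap.id - (((↑c⁻¹ : R) • LinearMap.proj v).smulRight g)
  have hT : ∀ x, T x = x - (↑c⁻¹ * x v) • g := fun x => rfl
  have hTv : ∀ x, T x v = 0 := fun x => by
    simp [hT, ← hc, mul_right_comm _ (x v)]
  have hr_inj : ∀ x y : X → R, x v = y v → r x = r y → x = y := fun x y hv hr => by
    funext i
    by_cases hi : i = v
    · rwa [hi]
    · exact congrFun hr ⟨i, hi⟩
  set ψ := (L.map r).mkQ ∘ₗ r ∘ₗ T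
  have hsurj : Function.Surjective ψ := by
    intro z
    obtain ⟨w, rfl⟩ := (L.map r).mkQ_surjective z
    set x : X → R := fun i => if h : i = v then 0 else w ⟨i, h⟩
    have hTx : T x = x := by simp [hT, x]
    refine ⟨x, ?_⟩
    simp only [ψ, LinearMap.comp_apply, hTx]
    congr 1
    funext j
    simp [r, x, LinearMap.funLeft, j.2]
  have hker : LinearMap.ker ψ = span R {g} ⊔ L := by
    apply le_antisymm
    · intro x hx
      obtain ⟨y, hy, hyx⟩ := (Submodule.Quotient.mk_eq_zero _).mp hx
      have hxy : T x = y := hr_inj _ _ (by rw [hTv, hL y hy]) hyx.symm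
      have : x = (↑c⁻¹ * x v) • g + y := by rw [← hxy, hT]; abel
      rw [this]
      exact add_mem (mem_sup_left (smul_mem _ _ (mem_span_singleton_self g))) (mem_sup_right hy)
    · refine sup_le ?_ fun y hy => ?_
      · rw [span_le, Set.singleton_subset_iff]
        simp [ψ, hT, ← hc]
      · have : T y = y := by simp [hT, hL y hy]
        simpa [ψ, this] using ⟨y, hy, rfl⟩
  exact ⟨(quotEquivOfEq _ _ hker.symm).trans (ψ.quotKerEquivOfSurjective hsurj)⟩

theorem nonempty_coker_equiv_submatrix_of_isUnit {m n : Type*} [Fintype n] [DecidableEq n]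
    (S : Matrix m n R) {i : m} {j : n} (hij : IsUnit (S i j))
    (hS : ∀ a ≠ i, ∀ b ≠ j, S a j * S i b = 0) :
    Nonempty (((m → R) ⧸ LinearMap.range S.mulVecLin) ≃ₗ[R]
      (({a // a ≠ i} → R) ⧸ LinearMap.range (S.submatrix (Subtype.val : {a // a ≠ i} → m)
        (Subtype.val : {b // b ≠ j} → n)).mulVecLin)) := by
  obtain ⟨c, hc⟩ := hij
  -- clear row `i` by column operations against the pivot column `j`
  set L : Submodule R (m → R) :=
    span R (Set.range fun b : {b // b ≠ j} => S.col b - (↑c⁻¹ * S i b) • S.col j)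
  have hrange : LinearMap.range S.mulVecLin = span R {S.col j} ⊔ L := by
    rw [Matrix.range_mulVecLin]
    apply le_antisymm
    · rw [span_le]
      rintro _ ⟨b, rfl⟩
      by_cases hb : b = j
      · exact hb ▸ mem_sup_left (mem_span_singleton_self _)
      · rw [← sub_add_cancel (S.col b) ((↑c⁻¹ * S i b) • S.col j)]
        exact add_mem (mem_sup_right (subset_span ⟨⟨b, hb⟩, rfl⟩))
          (mem_sup_left (smul_mem _ _ (mem_span_singleton_self _)))
    · refine sup_le (span_le.mpr (Set.singleton_subset_iff.mpr (subset_span ⟨j, rfl⟩)))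
        (span_le.mpr ?_)
      rintro _ ⟨b, rfl⟩
      exact sub_mem (subset_span ⟨b, rfl⟩) (smul_mem _ _ (subset_span ⟨j, rfl⟩))
  have hL : ∀ y ∈ L, y i = 0 := by
    intro y hy
    refine span_induction ?_ (by simp) (fun x y _ _ hx hy => by simp [hx, hy])
      (fun a x _ hx => by simp [hx]) hy
    rintro _ ⟨b, rfl⟩
    simp [← hc, mul_right_comm _ (S i b)]
  have hmap : L.map (LinearMap.funLeft R R Subtype.val) = LinearMap.range (S.submatrix
      (Subtype.val : {a // a ≠ i} → m) (Subtype.val : {b // b ≠ j} → n)).mulVecLin := by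
    rw [Matrix.range_mulVecLin, map_span, ← Set.range_comp]
    congr 2
    funext b a
    simp [LinearMap.funLeft, mul_assoc, mul_comm (S i b), hS a a.2 b b.2]
  obtain ⟨e⟩ := nonempty_quotient_span_sup_equiv_of_isUnit (S.col j) ⟨c, hc⟩ L hL
  rw [← hrange, hmap] at e
  exact ⟨e⟩

theorem Matrix.range_mulVecLin_submatrix_of_surjective {m n n' : Type*} [Fintype n] [Fintype n']
    (M : Matrix m n R) {f : n' → n} (hf : Function.Surjective f) :
    LinearMap.range (M.submatrix id f).mulVecLin = LinearMap.range M.mulVecLin := by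
  rw [Matrix.range_mulVecLin, Matrix.range_mulVecLin]
  exact congrArg _ (hf.range_comp M.col)

theorem nonempty_coker_equiv_submatrix_of_leaf {X : Type*} [Fintype X] [DecidableEq X]
    (S : Matrix X X R) {u v : X} (huv : u ≠ v) (hu : IsUnit (S u v)) (hv : IsUnit (S v u))
    (hcol : ∀ a ≠ u, S a v = 0) (hrow : ∀ b ≠ u, S v b = 0) :
    Nonempty (((X → R) ⧸ LinearMap.range S.mulVecLin) ≃ₗ[R]
      (({a : {a // a ≠ u} // a ≠ ⟨v, huv.symm⟩} → R) ⧸ LinearMap.range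
        (S.submatrix (fun a : {a : {a // a ≠ u} // a ≠ ⟨v, huv.symm⟩} => a.1.1)
          (fun a : {a : {a // a ≠ u} // a ≠ ⟨v, huv.symm⟩} => a.1.1)).mulVecLin)) := by
  obtain ⟨e₁⟩ := nonempty_coker_equiv_submatrix_of_isUnit S hu
    fun a ha _ _ => by rw [hcol a ha, zero_mul]
  obtain ⟨e₂⟩ := nonempty_coker_equiv_submatrix_of_isUnit (S.submatrix Subtype.val Subtype.val)
    (i := (⟨v, huv.symm⟩ : {a // a ≠ u})) (j := (⟨u, huv⟩ : {b // b ≠ v})) hv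
    fun _ _ b hb => by simp [hrow b (fun h => hb (Subtype.ext h))]
  rw [Matrix.submatrix_submatrix] at e₂
  -- rows lost `u` then `v`, columns `v` then `u`; `f` matches the two index types
  let f : {a : {a // a ≠ u} // a ≠ ⟨v, huv.symm⟩} → {b : {b // b ≠ v} // b ≠ ⟨u, huv⟩} :=
    fun a => ⟨⟨a.1.1, fun h => a.2 (Subtype.ext h)⟩, fun h => a.1.2 (congrArg Subtype.val h)⟩
  have hf : Function.Surjective f := fun b =>
    ⟨⟨⟨b.1.1, fun h => b.2 (Subtype.ext h)⟩, fun h => b.1.2 (congrArg Subtype.val h)⟩, rfl⟩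
  rw [← Matrix.range_mulVecLin_submatrix_of_surjective _ hf] at e₂
  exact ⟨e₁.trans e₂⟩

theorem exists_coker_linearEquiv_of_isAcyclic {X : Type*} [Fintype X] (S : Matrix X X R)
    (G : SimpleGraph X) (hG : ∀ i j, G.Adj i j ↔ S i j ≠ 0)
    (hS : ∀ i j, S i j ≠ 0 → IsUnit (S i j)) (hacyc : G.IsAcyclic) :
    ∃ k, 2 * k ≤ Fintype.card X ∧ Nonempty (((X → R) ⧸ LinearMap.range S.mulVecLin) ≃ₗ[R]
      (Fin (Fintype.card X - 2 * k) → R)) := by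
  classical
  induction hN : Fintype.card X using Nat.strong_induction_on generalizing X with
  | _ N ih =>
  by_cases hzero : S = 0
  · subst hzero
    refine ⟨0, by omega, ⟨?_⟩⟩
    rw [Matrix.mulVecLin_zero, LinearMap.range_zero, ← hN]
    exact (quotEquivOfEqBot _ rfl).trans (LinearEquiv.funCongrLeft R R (Fintype.equivFin X).symm)
  obtain ⟨a, b, hab⟩ : ∃ a b, S a b ≠ 0 := by simpa [← Matrix.ext_iff] using hzero
  obtain ⟨u, v, huv, hleaf⟩ := hacyc.exists_adj_forall_adj_eq ((hG a b).mpr hab)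
  have hcol : ∀ a ≠ u, S a v = 0 := fun a ha =>
    by_contra fun h => ha (hleaf a ((hG a v).mpr h).symm)
  have hrow : ∀ b ≠ u, S v b = 0 := fun b hb => by_contra fun h => hb (hleaf b ((hG v b).mpr h))
  obtain ⟨e₁⟩ := nonempty_coker_equiv_submatrix_of_leaf S huv.ne
    (hS _ _ ((hG u v).mp huv)) (hS _ _ ((hG v u).mp huv.symm)) hcol hrow
  set ι : {a : {a // a ≠ u} // a ≠ ⟨v, huv.ne.symm⟩} ↪ X :=
    ⟨fun a => a.1.1, Subtype.val_injective.comp Subtype.val_injective⟩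
  have hN2 : 2 ≤ N := hN ▸ Fintype.one_lt_card_iff.mpr ⟨u, v, huv.ne⟩
  have hcard : Fintype.card {a : {a // a ≠ u} // a ≠ ⟨v, huv.ne.symm⟩} = N - 2 := by
    simp only [ne_eq, Fintype.card_subtype_compl, hN, Fintype.card_unique]
    omega
  obtain ⟨k, hk, ⟨e₂⟩⟩ := ih (N - 2) (by omega) (S.submatrix ι ι) (G.comap ι)
    (fun _ _ => hG _ _) (fun _ _ => hS _ _) (hacyc.of_comap ι) hcard
  refine ⟨k + 1, by omega, ⟨e₁.trans (e₂.trans (LinearEquiv.funCongrLeft R R (finCongr ?_)))⟩⟩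
  omega

end

theorem coker_skew_adjacency_tree_free_general (n : ℕ) (B : Matrix (Fin n) (Fin n) ℕ)
    (hsimple : ∀ i j, B i j + B j i ≤ 1)
    (G : SimpleGraph (Fin n))
    (hAdj : ∀ i j, G.Adj i j ↔ 0 < B i j + B j i)
    (hTree : G.IsTree) :
    ∃ k : ℕ, 2 * k ≤ n ∧
      Nonempty
        (cokerG (B.map (Nat.cast : ℕ → ℤ) - (B.map (Nat.cast : ℕ → ℤ)).transpose) ≃+
          (Fin (n - 2 * k) → ℤ)) := by
  set S := B.map (Nat.cast : ℕ → ℤ) - (B.map (Nat.cast : ℕ → ℤ)).transpose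
  have hS : ∀ i j, S i j = B i j - B j i := fun _ _ => rfl
  have hadj : ∀ i j, G.Adj i j ↔ S i j ≠ 0 := fun i j => by
    have := hsimple i j
    rw [hAdj, hS]
    omega
  have hunit : ∀ i j, S i j ≠ 0 → IsUnit (S i j) := fun i j h => by
    have := hsimple i j
    rw [hS] at h ⊢
    rw [Int.isUnit_iff]
    omega
  obtain ⟨k, hk, ⟨e⟩⟩ := exists_coker_linearEquiv_of_isAcyclic S G hadj hunit hTree.isAcyclic
  rw [Fintype.card_fin] at hk e
  exact ⟨k, hk, ⟨e.toAddEquiv⟩⟩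

/-- If the underlying graph of a finite quiver `Q` (with adjacency matrix `B`) is a
tree on `n` vertices, then `coker(B - Bᵀ)` is a free abelian group, of rank `n - 2k`
for some `k`. -/
theorem coker_skew_adjacency_tree_free (n : ℕ) (B : Matrix (Fin n) (Fin n) ℕ)
    (hloop : ∀ i, B i i = 0)
    (hsimple : ∀ i j, B i j + B j i ≤ 1)
    (G : SimpleGraph (Fin n))
    (hAdj : ∀ i j, G.Adj i j ↔ 0 < B i j + B j i)
    (hTree : G.IsTree) :
    ∃ k : ℕ, 2 * k ≤ n ∧
      Nonempty
        (cokerG (B.map (Nat.cast : ℕ → ℤ) - (B.map (Nat.cast : ℕ → ℤ)).transpose) ≃+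
          (Fin (n - 2 * k) → ℤ)) :=
  coker_skew_adjacency_tree_free_general n B hsimple G hAdj hTree
end

section
/- For the linear (path) quiver A_n with arrows i → i+1 for 1 ≤ i ≤ n-1, coker(B - B^T) is 0 if n is even and Z if n is odd, where B is the adjacency matrix. -/
/-- Adjacency matrix of the linearly oriented quiver of type `A_n`:
arrows `i → i+1` for `1 ≤ i ≤ n-1`. -/
abbrev adjA (n : ℕ) : Matrix (Fin n) (Fin n) ℤ :=
  fun i j => if (i : ℕ) + 1 = (j : ℕ) then 1 else 0

def vext (n : ℕ) (v : Fin n → ℤ) (i : ℕ) : ℤ := if h : i < n then v ⟨i, h⟩ else 0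

def Esum (n : ℕ) (v : Fin n → ℤ) (j : ℕ) : ℤ :=
  ∑ i ∈ Finset.range j, if i % 2 = 0 then vext n v i else 0

def Osum (n : ℕ) (v : Fin n → ℤ) (j : ℕ) : ℤ :=
  ∑ i ∈ Finset.range j, if i % 2 = 1 then vext n v i else 0

def Wn (n : ℕ) (v : Fin n → ℤ) (j : ℕ) : ℤ :=
  if j % 2 = 0 then Osum n v j - Osum n v n else Esum n v j

lemma Esum_succ (n : ℕ) (v : Fin n → ℤ) (j : ℕ) :
    Esum n v (j + 1) = Esum n v j + if j % 2 = 0 then vext n v j else 0 :=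
  Finset.sum_range_succ _ _

lemma Osum_succ (n : ℕ) (v : Fin n → ℤ) (j : ℕ) :
    Osum n v (j + 1) = Osum n v j + if j % 2 = 1 then vext n v j else 0 :=
  Finset.sum_range_succ _ _

lemma mulVec_adjA {n : ℕ} (x : Fin n → ℤ) (i : Fin n) :
    (adjA n).mulVec x i = if h : (i : ℕ) + 1 < n then x ⟨i + 1, h⟩ else 0 := by
  simp only [Matrix.mulVec, dotProduct, adjA, ite_mul, one_mul, zero_mul]
  split
  · next h =>
    rw [Finset.sum_eq_single (⟨(i:ℕ)+1, h⟩ : Fin n)]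
    · simp
    · intro b _ hb
      rw [if_neg]
      intro hc; exact hb (by ext; simp; omega)
    · simp
  · next h =>
    apply Finset.sum_eq_zero
    intro b _
    rw [if_neg]
    intro hc; exact h (hc ▸ b.isLt)

lemma mulVec_adjAT {n : ℕ} (x : Fin n → ℤ) (i : Fin n) :
    (adjA n).transpose.mulVec x i =
      if h : 0 < (i : ℕ) then x ⟨(i : ℕ) - 1, by omega⟩ else 0 := by
  simp only [Matrix.mulVec, dotProduct, Matrix.transpose_apply, adjA, ite_mul, one_mul,
    zero_mul]
  split
  · next h =>
    rw [Finset.sum_eq_single (⟨(i:ℕ)-1, by omega⟩ : Fin n)]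
    · rw [if_pos]; simp; omega
    · intro b _ hb
      rw [if_neg]
      intro hc; exact hb (by ext; simp; omega)
    · simp
  · next h =>
    apply Finset.sum_eq_zero
    intro b _
    rw [if_neg]; omega

lemma key (n : ℕ) (v : Fin n → ℤ) (hv : n % 2 = 1 → Esum n v n = 0) :
    (adjA n - (adjA n).transpose).mulVec (fun j => Wn n v j) = v := by
  funext i
  rw [Matrix.sub_mulVec, Pi.sub_apply, mulVec_adjA, mulVec_adjAT]
  have hvi : vext n v i = v i := by simp [vext]
  rcases Nat.even_or_odd (i : ℕ) with he | ho
  · -- i even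
    have h2 : (i : ℕ) % 2 = 0 := Nat.even_iff.mp he
    have e1 : Esum n v ((i:ℕ) + 1) = Esum n v (i:ℕ) + vext n v i := by
      rw [Esum_succ, if_pos h2]
    by_cases h1 : (i : ℕ) + 1 < n
    · rw [dif_pos h1]
      by_cases h0 : 0 < (i : ℕ)
      · rw [dif_pos h0]
        have h3 : (i:ℕ) - 1 + 1 = (i:ℕ) := by omega
        have e2 : Esum n v (i:ℕ) = Esum n v ((i:ℕ) - 1) := by
          conv_lhs => rw [← h3]
          rw [Esum_succ, if_neg (by omega), add_zero]
        simp only [Wn]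
        rw [if_neg (by omega), if_neg (by omega)]
        omega
      · rw [dif_neg h0]
        have hi0 : (i : ℕ) = 0 := by omega
        simp only [Wn, hi0]
        rw [if_neg (by omega)]
        have e0 : Esum n v 0 = 0 := by simp [Esum]
        simp only [hi0] at hvi e1
        omega
    · -- i + 1 = n, n odd
      have hn : (i : ℕ) + 1 = n := by omega
      have hE := hv (by omega)
      have en : Esum n v n = Esum n v ((i:ℕ)+1) := congrArg (Esum n v) hn.symm
      rw [dif_neg h1]
      by_cases h0 : 0 < (i : ℕ)
      · rw [dif_pos h0]
        have h3 : (i:ℕ) - 1 + 1 = (i:ℕ) := by omega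
        have e2 : Esum n v (i:ℕ) = Esum n v ((i:ℕ) - 1) := by
          conv_lhs => rw [← h3]
          rw [Esum_succ, if_neg (by omega), add_zero]
        simp only [Wn]
        rw [if_neg (by omega)]
        omega
      · rw [dif_neg h0]
        have hi0 : (i : ℕ) = 0 := by omega
        have e0 : Esum n v 0 = 0 := by simp [Esum]
        simp only [hi0] at hvi e1 en
        omega
  · -- i odd
    have h2 : (i : ℕ) % 2 = 1 := Nat.odd_iff.mp ho
    have h0 : 0 < (i : ℕ) := by omega
    rw [dif_pos h0]
    have h3 : (i:ℕ) - 1 + 1 = (i:ℕ) := by omega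
    have o2 : Osum n v (i:ℕ) = Osum n v ((i:ℕ) - 1) := by
      conv_lhs => rw [← h3]
      rw [Osum_succ, if_neg (by omega), add_zero]
    have o1 : Osum n v ((i:ℕ) + 1) = Osum n v (i:ℕ) + vext n v i := by
      rw [Osum_succ, if_pos h2]
    by_cases h1 : (i : ℕ) + 1 < n
    · rw [dif_pos h1]
      simp only [Wn]
      rw [if_pos (by omega), if_pos (by omega)]
      omega
    · have hn : (i : ℕ) + 1 = n := by omega
      have oN : Osum n v n = Osum n v ((i:ℕ)+1) := congrArg (Osum n v) hn.symm
      rw [dif_neg h1]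
      simp only [Wn]
      rw [if_pos (by omega)]
      omega

def phi (n : ℕ) : ((Fin n → ℤ) →ₗ[ℤ] ℤ) where
  toFun v := ∑ i : Fin n, if (i : ℕ) % 2 = 0 then v i else 0
  map_add' u v := by
    rw [← Finset.sum_add_distrib]
    exact Finset.sum_congr rfl fun i _ => by split <;> simp
  map_smul' c v := by
    simp only [RingHom.id_apply, smul_eq_mul]
    rw [Finset.mul_sum]
    exact Finset.sum_congr rfl fun i _ => by split <;> simp

lemma phi_eq_Esum (n : ℕ) (v : Fin n → ℤ) : phi n v = Esum n v n := by
  rw [Esum, ← Fin.sum_univ_eq_sum_range (fun i => if i % 2 = 0 then vext n v i else 0) n]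
  simp only [phi, LinearMap.coe_mk, AddHom.coe_mk]
  exact Finset.sum_congr rfl fun i _ => by
    simp [vext, i.isLt]

lemma phi_mulVec (n : ℕ) (hn : n % 2 = 1) (u : Fin n → ℤ) :
    phi n ((adjA n - (adjA n).transpose).mulVec u) = 0 := by
  set S := adjA n - (adjA n).transpose with hS
  set χ : Fin n → ℤ := fun i => if (i : ℕ) % 2 = 0 then (1 : ℤ) else 0 with hχ
  have h1 : phi n (S.mulVec u) = dotProduct χ (S.mulVec u) := by
    simp only [phi, LinearMap.coe_mk, AddHom.coe_mk, dotProduct]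
    exact Finset.sum_congr rfl fun i _ => by simp only [hχ]; split <;> simp
  rw [h1, Matrix.dotProduct_mulVec]
  have h2 : Matrix.vecMul χ S = S.transpose.mulVec χ := by
    rw [← Matrix.vecMul_transpose, Matrix.transpose_transpose]
  have h3 : S.transpose.mulVec χ = 0 := by
    funext i
    rw [hS, Matrix.transpose_sub, Matrix.transpose_transpose, Matrix.sub_mulVec,
      Pi.sub_apply, mulVec_adjA, mulVec_adjAT]
    have hχv : ∀ (k : ℕ) (h : k < n), χ ⟨k, h⟩ = if k % 2 = 0 then (1 : ℤ) else 0 :=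
      fun _ _ => rfl
    rcases Nat.even_or_odd (i : ℕ) with he | ho
    · have h2 : (i : ℕ) % 2 = 0 := Nat.even_iff.mp he
      rw [Pi.zero_apply]
      split_ifs <;> first | omega | (simp only [hχv]; split_ifs <;> omega)
    · have h2 : (i : ℕ) % 2 = 1 := Nat.odd_iff.mp ho
      have hlt : (i : ℕ) + 1 < n := by
        have := i.isLt; omega
      have hpos : 0 < (i : ℕ) := by omega
      rw [dif_pos hpos, dif_pos hlt, Pi.zero_apply, hχv, hχv,
        if_pos (by omega), if_pos (by omega)]
      ring
  rw [h2, h3]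
  simp

/-- For the path quiver `A_n`, the cokernel of `B - Bᵀ` vanishes if `n` is even
and is infinite cyclic if `n` is odd. -/
theorem coker_skew_adjacency_An (n : ℕ) :
    (Even n → Subsingleton (cokerG (adjA n - (adjA n).transpose))) ∧
    (Odd n → Nonempty (cokerG (adjA n - (adjA n).transpose) ≃+ ℤ)) := by
  set S := adjA n - (adjA n).transpose with hS
  constructor
  · intro hev
    have hn : n % 2 = 0 := Nat.even_iff.mp hev
    have htop : LinearMap.range S.mulVecLin = ⊤ := by
      rw [LinearMap.range_eq_top]
      intro v
      exact ⟨fun j => Wn n v j, by rw [Matrix.mulVecLin_apply]; exact key n v (by omega)⟩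
    constructor
    intro a b
    obtain ⟨a, rfl⟩ := Submodule.Quotient.mk_surjective _ a
    obtain ⟨b, rfl⟩ := Submodule.Quotient.mk_surjective _ b
    rw [Submodule.Quotient.eq, htop]
    trivial
  · intro hod
    have hn : n % 2 = 1 := Nat.odd_iff.mp hod
    have hker : LinearMap.range S.mulVecLin = LinearMap.ker (phi n) := by
      ext v
      constructor
      · rintro ⟨u, rfl⟩
        rw [LinearMap.mem_ker, Matrix.mulVecLin_apply]
        exact phi_mulVec n hn u
      · intro hv
        exact ⟨fun j => Wn n v j, by
          rw [Matrix.mulVecLin_apply]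
          exact key n v (fun _ => by rw [← phi_eq_Esum]; exact hv)⟩
    have hsurj : Function.Surjective (phi n) := by
      intro z
      have hpos : 0 < n := by omega
      refine ⟨fun j => if j = ⟨0, hpos⟩ then z else 0, ?_⟩
      show (∑ i : Fin n, _) = z
      rw [Finset.sum_eq_single (⟨0, hpos⟩ : Fin n)]
      · simp
      · intro b _ hb
        simp [if_neg hb]
      · simp
    exact ⟨((Submodule.quotEquivOfEq _ _ hker).trans
      ((phi n).quotKerEquivOfSurjective hsurj)).toAddEquiv⟩
end

section
/- For a quiver of type D_n (n ≥ 4), the cokernel of B - B^T, with B the adjacency matrix, is isomorphic to Z^2 if n is even and to Z if n is odd. -/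
/-- Edge relation of the Dynkin tree `D_n` on vertices `0, …, n-1`: edges
`0 — 2`, `1 — 2`, and `i — (i+1)` for `2 ≤ i`. -/
def dynkinDEdge (n : ℕ) (i j : Fin n) : Prop :=
  ((i : ℕ) = 0 ∧ (j : ℕ) = 2) ∨ ((i : ℕ) = 1 ∧ (j : ℕ) = 2) ∨
    (2 ≤ (i : ℕ) ∧ (j : ℕ) = (i : ℕ) + 1)

namespace DnAux

instance (n : ℕ) (i j : Fin n) : Decidable (dynkinDEdge n i j) := by
  unfold dynkinDEdge; exact inferInstance

/-- The standard-orientation skew matrix for `D_n`. -/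
def S0 (n : ℕ) : Matrix (Fin n) (Fin n) ℤ :=
  Matrix.of fun i j =>
    if dynkinDEdge n i j then 1 else if dynkinDEdge n j i then -1 else 0

lemma edge_asymm {n : ℕ} {i j : Fin n} (h : dynkinDEdge n i j) : ¬ dynkinDEdge n j i := by
  unfold dynkinDEdge at *; omega

lemma S0_edge {n : ℕ} {i j : Fin n} (h : dynkinDEdge n i j) : S0 n i j = 1 := by
  simp only [S0, Matrix.of_apply, if_pos h]

lemma S0_rev {n : ℕ} {i j : Fin n} (h : dynkinDEdge n j i) : S0 n i j = -1 := by
  simp only [S0, Matrix.of_apply, if_neg (edge_asymm h), if_pos h]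

lemma S0_zero {n : ℕ} {i j : Fin n} (h1 : ¬ dynkinDEdge n i j) (h2 : ¬ dynkinDEdge n j i) :
    S0 n i j = 0 := by
  simp only [S0, Matrix.of_apply, if_neg h1, if_neg h2]

lemma S0_transpose (n : ℕ) : (S0 n).transpose = -(S0 n) := by
  ext i j
  simp only [Matrix.transpose_apply, Matrix.neg_apply]
  by_cases h1 : dynkinDEdge n i j
  · rw [S0_rev h1, S0_edge h1]
  · by_cases h2 : dynkinDEdge n j i
    · rw [S0_edge h2, S0_rev h2]; ring
    · rw [S0_zero h2 h1, S0_zero h1 h2]; ring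

section Sums

variable {n : ℕ}

lemma sum_two (a b : Fin n) (hab : a ≠ b) (f : Fin n → ℤ)
    (h : ∀ k, k ≠ a → k ≠ b → f k = 0) : ∑ k, f k = f a + f b := by
  have hsub : ∑ k ∈ ({a, b} : Finset (Fin n)), f k = ∑ k, f k := by
    apply Finset.sum_subset (Finset.subset_univ _)
    intro k _ hk
    simp only [Finset.mem_insert, Finset.mem_singleton, not_or] at hk
    exact h k hk.1 hk.2
  rw [← hsub, Finset.sum_pair hab]

lemma sum_three (a b c : Fin n) (hab : a ≠ b) (hac : a ≠ c) (hbc : b ≠ c) (f : Fin n → ℤ)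
    (h : ∀ k, k ≠ a → k ≠ b → k ≠ c → f k = 0) : ∑ k, f k = f a + f b + f c := by
  have hsub : ∑ k ∈ ({a, b, c} : Finset (Fin n)), f k = ∑ k, f k := by
    apply Finset.sum_subset (Finset.subset_univ _)
    intro k _ hk
    simp only [Finset.mem_insert, Finset.mem_singleton, not_or] at hk
    exact h k hk.1 hk.2.1 hk.2.2
  rw [← hsub]
  rw [Finset.sum_insert (by simp [hab, hac]), Finset.sum_pair hbc, add_assoc]

end Sums

section Rows

variable {n : ℕ} (hn : 4 ≤ n)

/-- Row `0` of `S0 *ᵥ v`. -/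
lemma row0 (v : Fin n → ℤ) (i t : Fin n) (hi : (i : ℕ) = 0) (ht : (t : ℕ) = 2) :
    (S0 n).mulVec v i = v t := by
  show ∑ k, S0 n i k * v k = v t
  rw [Fintype.sum_eq_single t (fun k hk => ?_)]
  · rw [S0_edge (by unfold dynkinDEdge; omega), one_mul]
  · have hk' : (k : ℕ) ≠ (t : ℕ) := fun h => hk (Fin.val_injective h)
    rw [S0_zero (by unfold dynkinDEdge; omega) (by unfold dynkinDEdge; omega), zero_mul]

lemma row1 (v : Fin n → ℤ) (i t : Fin n) (hi : (i : ℕ) = 1) (ht : (t : ℕ) = 2) :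
    (S0 n).mulVec v i = v t := by
  show ∑ k, S0 n i k * v k = v t
  rw [Fintype.sum_eq_single t (fun k hk => ?_)]
  · rw [S0_edge (by unfold dynkinDEdge; omega), one_mul]
  · have hk' : (k : ℕ) ≠ (t : ℕ) := fun h => hk (Fin.val_injective h)
    rw [S0_zero (by unfold dynkinDEdge; omega) (by unfold dynkinDEdge; omega), zero_mul]

lemma row2 (v : Fin n → ℤ) (i a b c : Fin n) (hi : (i : ℕ) = 2) (ha : (a : ℕ) = 0)
    (hb : (b : ℕ) = 1) (hc : (c : ℕ) = 3) :
    (S0 n).mulVec v i = v c - v a - v b := by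
  show ∑ k, S0 n i k * v k = v c - v a - v b
  rw [sum_three a b c (fun h => by have := congrArg Fin.val h; omega)
      (fun h => by have := congrArg Fin.val h; omega)
      (fun h => by have := congrArg Fin.val h; omega) _ (fun k hk1 hk2 hk3 => ?_)]
  · rw [S0_rev (show dynkinDEdge n a i by unfold dynkinDEdge; omega),
      S0_rev (show dynkinDEdge n b i by unfold dynkinDEdge; omega),
      S0_edge (show dynkinDEdge n i c by unfold dynkinDEdge; omega)]
    ring
  · have h1 : (k : ℕ) ≠ (a : ℕ) := fun h => hk1 (Fin.val_injective h)
    have h2 : (k : ℕ) ≠ (b : ℕ) := fun h => hk2 (Fin.val_injective h)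
    have h3 : (k : ℕ) ≠ (c : ℕ) := fun h => hk3 (Fin.val_injective h)
    rw [S0_zero (by unfold dynkinDEdge; omega) (by unfold dynkinDEdge; omega), zero_mul]

lemma row_mid (v : Fin n → ℤ) (i a b : Fin n) (hi3 : 3 ≤ (i : ℕ)) (hin : (i : ℕ) + 1 < n)
    (ha : (a : ℕ) + 1 = (i : ℕ)) (hb : (b : ℕ) = (i : ℕ) + 1) :
    (S0 n).mulVec v i = v b - v a := by
  show ∑ k, S0 n i k * v k = v b - v a
  rw [sum_two a b (fun h => by have := congrArg Fin.val h; omega) _ (fun k hk1 hk2 => ?_)]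
  · rw [S0_rev (show dynkinDEdge n a i by unfold dynkinDEdge; omega),
      S0_edge (show dynkinDEdge n i b by unfold dynkinDEdge; omega)]
    ring
  · have h1 : (k : ℕ) ≠ (a : ℕ) := fun h => hk1 (Fin.val_injective h)
    have h2 : (k : ℕ) ≠ (b : ℕ) := fun h => hk2 (Fin.val_injective h)
    rw [S0_zero (by unfold dynkinDEdge; omega) (by unfold dynkinDEdge; omega), zero_mul]

lemma row_last (v : Fin n → ℤ) (i a : Fin n) (hn4 : 4 ≤ n) (hi : (i : ℕ) = n - 1)
    (ha : (a : ℕ) = n - 2) :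
    (S0 n).mulVec v i = -v a := by
  show ∑ k, S0 n i k * v k = -v a
  rw [Fintype.sum_eq_single a (fun k hk => ?_)]
  · rw [S0_rev (show dynkinDEdge n a i by unfold dynkinDEdge; omega)]; ring
  · have hk' : (k : ℕ) ≠ (a : ℕ) := fun h => hk (Fin.val_injective h)
    have hkl : (k : ℕ) < n := k.isLt
    rw [S0_zero (by unfold dynkinDEdge; omega) (by unfold dynkinDEdge; omega), zero_mul]

end Rows

end DnAux

namespace DnAux

section Conj

/-- `S` entry with `ℕ` indices (junk value `0` out of range). -/
def Sapp (n : ℕ) (S : Matrix (Fin n) (Fin n) ℤ) (a b : ℕ) : ℤ :=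
  if h : a < n ∧ b < n then S ⟨a, h.1⟩ ⟨b, h.2⟩ else 0

/-- Sign-change vector turning `S` into the standard orientation. -/
def dfun (n : ℕ) (S : Matrix (Fin n) (Fin n) ℤ) : ℕ → ℤ
  | 0 => Sapp n S 0 2
  | 1 => Sapp n S 1 2
  | 2 => 1
  | (k+3) => dfun n S (k+2) * Sapp n S (k+2) (k+3)

lemma dfun_sq {n : ℕ} (S : Matrix (Fin n) (Fin n) ℤ) (hn : 4 ≤ n)
    (hsq : ∀ i j : Fin n, dynkinDEdge n i j → S i j * S i j = 1) :
    ∀ k, k < n → dfun n S k * dfun n S k = 1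
  | 0, _ => by
      simp only [dfun, Sapp]
      rw [dif_pos ⟨by omega, by omega⟩]
      exact hsq _ _ (Or.inl ⟨rfl, rfl⟩)
  | 1, _ => by
      simp only [dfun, Sapp]
      rw [dif_pos ⟨by omega, by omega⟩]
      exact hsq _ _ (Or.inr (Or.inl ⟨rfl, rfl⟩))
  | 2, _ => by simp [dfun]
  | (k+3), hk => by
      have ih := dfun_sq S hn hsq (k+2) (by omega)
      simp only [dfun, Sapp]
      rw [dif_pos ⟨by omega, hk⟩]
      rw [mul_mul_mul_comm, ih, one_mul]
      exact hsq _ _ (Or.inr (Or.inr ⟨Nat.le_add_left 2 k, rfl⟩))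

lemma conj_edge {n : ℕ} (S : Matrix (Fin n) (Fin n) ℤ) (hn : 4 ≤ n)
    (hsq : ∀ i j : Fin n, dynkinDEdge n i j → S i j * S i j = 1)
    (i j : Fin n) (h : dynkinDEdge n i j) :
    dfun n S (i : ℕ) * S i j * dfun n S (j : ℕ) = 1 := by
  rcases h with ⟨hi, hj⟩ | ⟨hi, hj⟩ | ⟨hi, hj⟩
  · rw [hi, hj]
    simp only [dfun, Sapp]
    rw [dif_pos ⟨by omega, by omega⟩]
    have e1 : (⟨0, by omega⟩ : Fin n) = i := Fin.ext hi.symm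
    have e2 : (⟨2, by omega⟩ : Fin n) = j := Fin.ext hj.symm
    rw [e1, e2, mul_one]
    exact hsq i j (Or.inl ⟨hi, hj⟩)
  · rw [hi, hj]
    simp only [dfun, Sapp]
    rw [dif_pos ⟨by omega, by omega⟩]
    have e1 : (⟨1, by omega⟩ : Fin n) = i := Fin.ext hi.symm
    have e2 : (⟨2, by omega⟩ : Fin n) = j := Fin.ext hj.symm
    rw [e1, e2, mul_one]
    exact hsq i j (Or.inr (Or.inl ⟨hi, hj⟩))
  · obtain ⟨k, hk⟩ : ∃ k, (i : ℕ) = k + 2 := ⟨(i : ℕ) - 2, by omega⟩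
    have hjn : k + 3 < n := by have := j.isLt; omega
    rw [hj, hk, show k + 2 + 1 = k + 3 from rfl]
    have hstep : dfun n S (k+3) = dfun n S (k+2) * Sapp n S (k+2) (k+3) := by
      simp only [dfun]
    rw [hstep]
    unfold Sapp
    rw [dif_pos ⟨by omega, hjn⟩]
    have e1 : (⟨k+2, by omega⟩ : Fin n) = i := Fin.ext (show k + 2 = (i : ℕ) from by omega)
    have e2 : (⟨k+3, hjn⟩ : Fin n) = j := Fin.ext (show k + 3 = (j : ℕ) from by omega)
    rw [show (⟨k+2, by omega⟩ : Fin n) = i from e1, show (⟨k+3, hjn⟩ : Fin n) = j from e2]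
    have ih := dfun_sq S hn hsq (k+2) (by omega)
    rw [show dfun n S (k+2) * S i j * (dfun n S (k+2) * S i j)
        = (dfun n S (k+2) * dfun n S (k+2)) * (S i j * S i j) from by ring, ih, one_mul]
    exact hsq i j (Or.inr (Or.inr ⟨hi, hj⟩))

lemma conj {n : ℕ} (S : Matrix (Fin n) (Fin n) ℤ) (hn : 4 ≤ n)
    (hsq : ∀ i j : Fin n, dynkinDEdge n i j → S i j * S i j = 1)
    (hskew : ∀ i j : Fin n, S j i = -S i j)
    (hzero : ∀ i j : Fin n, ¬ dynkinDEdge n i j → ¬ dynkinDEdge n j i → S i j = 0)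
    (i j : Fin n) :
    dfun n S (i : ℕ) * S i j * dfun n S (j : ℕ) = S0 n i j := by
  by_cases h1 : dynkinDEdge n i j
  · rw [S0_edge h1]; exact conj_edge S hn hsq i j h1
  · by_cases h2 : dynkinDEdge n j i
    · rw [S0_rev h2]
      have := conj_edge S hn hsq j i h2
      have hs := hskew j i
      -- hs : S i j = - S j i
      linear_combination dfun n S (i:ℕ) * dfun n S (j:ℕ) * hs - this
    · rw [S0_zero h1 h2, hzero i j h1 h2]; ring

/-- The diagonal sign-change linear map. -/
def Dmap (n : ℕ) (S : Matrix (Fin n) (Fin n) ℤ) : (Fin n → ℤ) →ₗ[ℤ] (Fin n → ℤ) where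
  toFun x := fun i => dfun n S (i : ℕ) * x i
  map_add' x y := by funext i; simp [mul_add]
  map_smul' c x := by funext i; simp [smul_eq_mul]; ring

lemma Dmap_invol {n : ℕ} (S : Matrix (Fin n) (Fin n) ℤ) (hn : 4 ≤ n)
    (hsq : ∀ i j : Fin n, dynkinDEdge n i j → S i j * S i j = 1) :
    Function.Involutive (Dmap n S) := by
  intro x; funext i
  show dfun n S (i : ℕ) * (dfun n S (i : ℕ) * x i) = x i
  rw [← mul_assoc, dfun_sq S hn hsq (i : ℕ) i.isLt, one_mul]

lemma S0_eq_conj {n : ℕ} (S : Matrix (Fin n) (Fin n) ℤ) (hn : 4 ≤ n)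
    (hsq : ∀ i j : Fin n, dynkinDEdge n i j → S i j * S i j = 1)
    (hskew : ∀ i j : Fin n, S j i = -S i j)
    (hzero : ∀ i j : Fin n, ¬ dynkinDEdge n i j → ¬ dynkinDEdge n j i → S i j = 0)
    (x : Fin n → ℤ) :
    (S0 n).mulVec x = Dmap n S (S.mulVec (Dmap n S x)) := by
  funext i
  show ∑ j, S0 n i j * x j = dfun n S (i : ℕ) * ∑ j, S i j * (dfun n S (j : ℕ) * x j)
  rw [Finset.mul_sum]
  refine Finset.sum_congr rfl fun j _ => ?_
  rw [← conj S hn hsq hskew hzero i j]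
  ring

lemma range_S0_eq {n : ℕ} (S : Matrix (Fin n) (Fin n) ℤ) (hn : 4 ≤ n)
    (hsq : ∀ i j : Fin n, dynkinDEdge n i j → S i j * S i j = 1)
    (hskew : ∀ i j : Fin n, S j i = -S i j)
    (hzero : ∀ i j : Fin n, ¬ dynkinDEdge n i j → ¬ dynkinDEdge n j i → S i j = 0) :
    Submodule.map (Dmap n S) (LinearMap.range S.mulVecLin)
      = LinearMap.range (S0 n).mulVecLin := by
  have hinv := Dmap_invol S hn hsq
  ext y
  simp only [Submodule.mem_map, LinearMap.mem_range, Matrix.mulVecLin_apply]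
  constructor
  · rintro ⟨z, ⟨x, rfl⟩, rfl⟩
    refine ⟨Dmap n S x, ?_⟩
    rw [S0_eq_conj S hn hsq hskew hzero, hinv x]
  · rintro ⟨x, rfl⟩
    exact ⟨S.mulVec (Dmap n S x), ⟨Dmap n S x, rfl⟩,
      (S0_eq_conj S hn hsq hskew hzero x).symm⟩

/-- The cokernels of `S` and `S0 n` are isomorphic. -/
noncomputable def cokerEquiv {n : ℕ} (S : Matrix (Fin n) (Fin n) ℤ) (hn : 4 ≤ n)
    (hsq : ∀ i j : Fin n, dynkinDEdge n i j → S i j * S i j = 1)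
    (hskew : ∀ i j : Fin n, S j i = -S i j)
    (hzero : ∀ i j : Fin n, ¬ dynkinDEdge n i j → ¬ dynkinDEdge n j i → S i j = 0) :
    ((Fin n → ℤ) ⧸ LinearMap.range S.mulVecLin) ≃ₗ[ℤ]
      ((Fin n → ℤ) ⧸ LinearMap.range (S0 n).mulVecLin) :=
  Submodule.Quotient.equiv _ _
    (LinearEquiv.ofInvolutive (Dmap n S) (Dmap_invol S hn hsq))
    (range_S0_eq S hn hsq hskew hzero)

end Conj

end DnAux
namespace DnAux

section Coker

variable {n : ℕ}

/-- Partial alternating-parity tail sum. -/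
def Pfun (n : ℕ) (y : Fin n → ℤ) (k : ℕ) : ℤ :=
  ∑ m ∈ Finset.univ.filter (fun m : Fin n => k < (m : ℕ) ∧ (m : ℕ) % 2 ≠ k % 2), y m

def csol (hn : 4 ≤ n) (y : Fin n → ℤ) : ℤ := y ⟨0, by omega⟩ + Pfun n y 2

def gsol (hn : 4 ≤ n) (y : Fin n → ℤ) (k : ℕ) : ℤ :=
  -(Pfun n y k) + (if k % 2 = (n-1) % 2 then csol hn y else 0)

def xsol (hn : 4 ≤ n) (y : Fin n → ℤ) : Fin n → ℤ := fun k =>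
  if (k : ℕ) = 0 then gsol hn y 3 - y ⟨2, by omega⟩
  else if (k : ℕ) = 1 then 0
  else gsol hn y (k : ℕ)

lemma xsol_val0 (hn : 4 ≤ n) (y : Fin n → ℤ) (k : Fin n) (hk : (k : ℕ) = 0) :
    xsol hn y k = gsol hn y 3 - y ⟨2, by omega⟩ := by
  unfold xsol; rw [hk]; norm_num

lemma xsol_val1 (hn : 4 ≤ n) (y : Fin n → ℤ) (k : Fin n) (hk : (k : ℕ) = 1) :
    xsol hn y k = 0 := by
  unfold xsol; rw [hk]; norm_num

lemma xsol_ge2 (hn : 4 ≤ n) (y : Fin n → ℤ) (k : Fin n) (m : ℕ) (hm : (k : ℕ) = m)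
    (h2 : 2 ≤ m) : xsol hn y k = gsol hn y m := by
  unfold xsol; rw [hm, if_neg (by omega), if_neg (by omega)]

lemma Pfun_last (hn : 4 ≤ n) (y : Fin n → ℤ) (t : Fin n) (ht : (t : ℕ) = n - 1) :
    Pfun n y (n-2) = y t := by
  unfold Pfun
  rw [show Finset.univ.filter (fun m : Fin n => n - 2 < (m : ℕ) ∧ (m : ℕ) % 2 ≠ (n-2) % 2)
      = {t} from ?_, Finset.sum_singleton]
  ext m
  simp only [Finset.mem_filter, Finset.mem_univ, true_and, Finset.mem_singleton, Fin.ext_iff]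
  have := m.isLt
  omega

lemma Pfun_diff (hn : 4 ≤ n) (y : Fin n → ℤ) (j : ℕ) (h3 : 3 ≤ j) (hjn : j + 1 < n)
    (t : Fin n) (ht : (t : ℕ) = j) :
    Pfun n y (j-1) - Pfun n y (j+1) = y t := by
  unfold Pfun
  rw [← Finset.sum_sdiff_eq_sub (by intro m; simp only [Finset.mem_filter, Finset.mem_univ, true_and]; omega)]
  rw [show Finset.univ.filter (fun m : Fin n => j - 1 < (m : ℕ) ∧ (m : ℕ) % 2 ≠ (j-1) % 2)
      \ Finset.univ.filter (fun m : Fin n => j + 1 < (m : ℕ) ∧ (m : ℕ) % 2 ≠ (j+1) % 2)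
      = {t} from ?_, Finset.sum_singleton]
  ext m
  simp only [Finset.mem_sdiff, Finset.mem_filter, Finset.mem_univ, true_and,
    Finset.mem_singleton, Fin.ext_iff, not_and, not_not]
  omega

lemma xsol_two (hn : 4 ≤ n) (y : Fin n → ℤ) (t : Fin n) (ht : (t : ℕ) = 2)
    (hc : n % 2 = 1 ∨ y ⟨0, by omega⟩ + Pfun n y 2 = 0) :
    xsol hn y t = y ⟨0, by omega⟩ := by
  rw [xsol_ge2 hn y t 2 ht le_rfl]
  unfold gsol
  by_cases hp : 2 % 2 = (n-1) % 2
  · rw [if_pos hp]; unfold csol; ring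
  · rw [if_neg hp]
    rcases hc with h | h
    · omega
    · linarith

set_option maxHeartbeats 2000000 in
/-- The central construction: solving `S0 *ᵥ x = y`. -/
lemma solve (hn : 4 ≤ n) (y : Fin n → ℤ)
    (h01 : y ⟨0, by omega⟩ = y ⟨1, by omega⟩)
    (hc : n % 2 = 1 ∨ y ⟨0, by omega⟩ + Pfun n y 2 = 0) :
    (S0 n).mulVec (xsol hn y) = y := by
  funext i
  by_cases h0 : (i : ℕ) = 0
  · rw [row0 _ i ⟨2, by omega⟩ h0 rfl, xsol_two hn y ⟨2, by omega⟩ rfl hc]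
    exact congrArg y (Fin.ext h0.symm)
  by_cases h1 : (i : ℕ) = 1
  · rw [row1 _ i ⟨2, by omega⟩ h1 rfl, xsol_two hn y ⟨2, by omega⟩ rfl hc, h01]
    exact congrArg y (Fin.ext h1.symm)
  by_cases h2 : (i : ℕ) = 2
  · have e3 : xsol hn y ⟨3, by omega⟩ = gsol hn y 3 :=
      xsol_ge2 hn y ⟨3, by omega⟩ 3 rfl (by omega)
    rw [row2 _ i ⟨0, by omega⟩ ⟨1, by omega⟩ ⟨3, by omega⟩ h2 rfl rfl rfl,
      e3, xsol_val0 hn y ⟨0, by omega⟩ rfl, xsol_val1 hn y ⟨1, by omega⟩ rfl]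
    rw [show (⟨2, by omega⟩ : Fin n) = i from Fin.ext h2.symm]
    ring
  by_cases hl : (i : ℕ) = n - 1
  · have el : xsol hn y ⟨n-2, by omega⟩ = gsol hn y (n-2) :=
      xsol_ge2 hn y ⟨n-2, by omega⟩ (n-2) rfl (by omega)
    rw [row_last _ i ⟨n-2, by omega⟩ hn hl rfl, el]
    unfold gsol
    rw [if_neg (by omega), Pfun_last hn y i hl]
    ring
  · have h3 : 3 ≤ (i : ℕ) := by omega
    have hi1 : (i : ℕ) + 1 < n := by have := i.isLt; omega
    have ea : xsol hn y ⟨(i : ℕ) - 1, by omega⟩ = gsol hn y ((i : ℕ) - 1) :=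
      xsol_ge2 hn y ⟨(i : ℕ) - 1, by omega⟩ ((i : ℕ) - 1) rfl (by omega)
    have eb : xsol hn y ⟨(i : ℕ) + 1, by omega⟩ = gsol hn y ((i : ℕ) + 1) :=
      xsol_ge2 hn y ⟨(i : ℕ) + 1, by omega⟩ ((i : ℕ) + 1) rfl (by omega)
    rw [row_mid _ i ⟨(i : ℕ) - 1, by omega⟩ ⟨(i : ℕ) + 1, by omega⟩ h3 hi1
        (by show (i : ℕ) - 1 + 1 = (i : ℕ); omega) rfl, ea, eb]
    unfold gsol
    rw [show ((i : ℕ) + 1) % 2 = ((i : ℕ) - 1) % 2 from by omega]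
    have hd := Pfun_diff hn y (i : ℕ) h3 hi1 i rfl
    linarith

/-- Left-kernel vectors for the even case. -/
def aker (n : ℕ) (r : ℕ) : Fin n → ℤ := fun m =>
  if (m : ℕ) = r ∨ (3 ≤ (m : ℕ) ∧ (m : ℕ) % 2 = 1) then 1 else 0

lemma aker_val (r : ℕ) (m : Fin n) (v : ℕ) (hm : (m : ℕ) = v) :
    aker n r m = if v = r ∨ (3 ≤ v ∧ v % 2 = 1) then 1 else 0 := by
  unfold aker; rw [hm]

lemma S0_mulVec_aker (hn : 4 ≤ n) (hpar : n % 2 = 0) (r : ℕ) (hr : r < 2) :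
    (S0 n).mulVec (aker n r) = 0 := by
  funext i
  show (S0 n).mulVec (aker n r) i = (0 : ℤ)
  by_cases h0 : (i : ℕ) = 0
  · rw [row0 _ i ⟨2, by omega⟩ h0 rfl, aker_val r _ 2 rfl, if_neg (by omega)]
  by_cases h1 : (i : ℕ) = 1
  · rw [row1 _ i ⟨2, by omega⟩ h1 rfl, aker_val r _ 2 rfl, if_neg (by omega)]
  by_cases h2 : (i : ℕ) = 2
  · rw [row2 _ i ⟨0, by omega⟩ ⟨1, by omega⟩ ⟨3, by omega⟩ h2 rfl rfl rfl,
      aker_val r _ 3 rfl, aker_val r _ 0 rfl, aker_val r _ 1 rfl]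
    split_ifs <;> omega
  by_cases hl : (i : ℕ) = n - 1
  · rw [row_last _ i ⟨n-2, by omega⟩ hn hl rfl, aker_val r _ (n-2) rfl,
      if_neg (by omega)]
    ring
  · have h3 : 3 ≤ (i : ℕ) := by omega
    have hi1 : (i : ℕ) + 1 < n := by have := i.isLt; omega
    rw [row_mid _ i ⟨(i : ℕ) - 1, by omega⟩ ⟨(i : ℕ) + 1, by omega⟩ h3 hi1
        (by show (i : ℕ) - 1 + 1 = (i : ℕ); omega) rfl,
      aker_val r _ ((i : ℕ) + 1) rfl, aker_val r _ ((i : ℕ) - 1) rfl]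
    split_ifs <;> omega

/-- Dot product against a fixed vector, as a linear map. -/
def dotL (a : Fin n → ℤ) : (Fin n → ℤ) →ₗ[ℤ] ℤ where
  toFun y := dotProduct a y
  map_add' x y := by
    simp [dotProduct, mul_add, Finset.sum_add_distrib]
  map_smul' c x := by
    simp [dotProduct, Finset.mul_sum, smul_eq_mul]
    refine Finset.sum_congr rfl fun j _ => by ring

lemma dot_aker (hn : 4 ≤ n) (r : ℕ) (hr : r < 2) (y : Fin n → ℤ) :
    dotProduct (aker n r) y = y ⟨r, by omega⟩ + Pfun n y 2 := by
  unfold dotProduct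
  rw [Finset.sum_congr rfl (fun m _ => show aker n r m * y m
      = if (m : ℕ) = r ∨ (3 ≤ (m : ℕ) ∧ (m : ℕ) % 2 = 1) then y m else 0 from by
        unfold aker; split_ifs <;> simp)]
  rw [← Finset.sum_filter]
  rw [show Finset.univ.filter (fun m : Fin n => (m : ℕ) = r ∨ (3 ≤ (m : ℕ) ∧ (m : ℕ) % 2 = 1))
      = insert (⟨r, by omega⟩ : Fin n)
        (Finset.univ.filter (fun m : Fin n => 2 < (m : ℕ) ∧ (m : ℕ) % 2 ≠ 2 % 2)) from ?_]
  · rw [Finset.sum_insert (by simp only [Finset.mem_filter, Finset.mem_univ, true_and]; omega)]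
    rfl
  · ext m
    simp only [Finset.mem_filter, Finset.mem_univ, true_and, Finset.mem_insert, Fin.ext_iff]
    omega

/-- Left-kernel vector for the odd case. -/
def eker (n : ℕ) : Fin n → ℤ := fun m =>
  if (m : ℕ) = 0 then 1 else if (m : ℕ) = 1 then -1 else 0

lemma eker_val (m : Fin n) (v : ℕ) (hm : (m : ℕ) = v) :
    eker n m = if v = 0 then 1 else if v = 1 then -1 else 0 := by
  unfold eker; rw [hm]

lemma dot_eker (hn : 4 ≤ n) (y : Fin n → ℤ) :
    dotProduct (eker n) y = y ⟨0, by omega⟩ - y ⟨1, by omega⟩ := by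
  unfold dotProduct
  rw [sum_two ⟨0, by omega⟩ ⟨1, by omega⟩
      (fun h => by have := congrArg Fin.val h; simp at this) _ (fun k hk1 hk2 => ?_)]
  · rw [eker_val _ 0 rfl, eker_val _ 1 rfl]
    norm_num
    ring
  · have h1 : (k : ℕ) ≠ 0 := fun h => hk1 (Fin.ext h)
    have h2 : (k : ℕ) ≠ 1 := fun h => hk2 (Fin.ext h)
    rw [eker_val k (k : ℕ) rfl, if_neg h1, if_neg h2, zero_mul]

end Coker

end DnAux
/-- For any orientation `B` of the Dynkin diagram `D_n` (`n ≥ 4`), the cokernel of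
`B - Bᵀ` is `ℤ²` if `n` is even and `ℤ` if `n` is odd. -/
theorem coker_skew_adjacency_Dn (n : ℕ) (hn : 4 ≤ n) (B : Matrix (Fin n) (Fin n) ℤ)
    (hnonneg : ∀ i j, 0 ≤ B i j)
    (horient : ∀ i j, B i j = 0 ∨ B j i = 0)
    (hedge : ∀ i j, (dynkinDEdge n i j ∨ dynkinDEdge n j i) → B i j + B j i = 1)
    (hnonedge : ∀ i j, ¬(dynkinDEdge n i j ∨ dynkinDEdge n j i) → B i j + B j i = 0) :
    (Even n → Nonempty (cokerG (B - B.transpose) ≃+ (ℤ × ℤ))) ∧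
    (Odd n → Nonempty (cokerG (B - B.transpose) ≃+ ℤ)) := by
  classical
  have hentry : ∀ i j, (B - B.transpose) i j = B i j - B j i := by
    intro i j; simp [Matrix.sub_apply, Matrix.transpose_apply]
  have hsq : ∀ i j : Fin n, dynkinDEdge n i j →
      (B - B.transpose) i j * (B - B.transpose) i j = 1 := by
    intro i j h
    have he := hedge i j (Or.inl h)
    have hnn1 := hnonneg i j
    have hnn2 := hnonneg j i
    have h1 : (B - B.transpose) i j = 1 ∨ (B - B.transpose) i j = -1 := by
      rw [hentry]
      rcases horient i j with h0 | h0 <;> omega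
    rcases h1 with h1 | h1 <;> rw [h1] <;> norm_num
  have hskew : ∀ i j : Fin n, (B - B.transpose) j i = -((B - B.transpose) i j) := by
    intro i j; rw [hentry, hentry]; ring
  have hzero : ∀ i j : Fin n, ¬ dynkinDEdge n i j → ¬ dynkinDEdge n j i →
      (B - B.transpose) i j = 0 := by
    intro i j h1 h2
    have he := hnonedge i j (by tauto)
    have hnn1 := hnonneg i j
    have hnn2 := hnonneg j i
    rw [hentry]; omega
  have equiv0 := DnAux.cokerEquiv (B - B.transpose) hn hsq hskew hzero
  constructor
  · -- even case
    intro heven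
    have hpar : n % 2 = 0 := Nat.even_iff.mp heven
    set φ : (Fin n → ℤ) →ₗ[ℤ] ℤ × ℤ :=
      (DnAux.dotL (DnAux.aker n 0)).prod (DnAux.dotL (DnAux.aker n 1)) with hφ
    have hφ_apply : ∀ y : Fin n → ℤ,
        φ y = (dotProduct (DnAux.aker n 0) y, dotProduct (DnAux.aker n 1) y) := by
      intro y; rfl
    have hker : LinearMap.ker φ = LinearMap.range (DnAux.S0 n).mulVecLin := by
      ext y
      simp only [LinearMap.mem_ker, LinearMap.mem_range, hφ_apply, Prod.mk_eq_zero]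
      constructor
      · rintro ⟨h1, h2⟩
        rw [DnAux.dot_aker hn 0 (by omega)] at h1
        rw [DnAux.dot_aker hn 1 (by omega)] at h2
        refine ⟨DnAux.xsol hn y, ?_⟩
        rw [Matrix.mulVecLin_apply]
        exact DnAux.solve hn y (by linarith) (Or.inr h1)
      · rintro ⟨x, rfl⟩
        have key : ∀ r : ℕ, r < 2 →
            dotProduct (DnAux.aker n r) ((DnAux.S0 n).mulVecLin x) = 0 := by
          intro r hr
          rw [Matrix.mulVecLin_apply, Matrix.dotProduct_mulVec]
          have h1 : DnAux.S0 n = -((DnAux.S0 n).transpose) := by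
            rw [DnAux.S0_transpose, neg_neg]
          rw [h1, Matrix.vecMul_neg, Matrix.vecMul_transpose,
            DnAux.S0_mulVec_aker hn hpar r hr]
          simp
        exact ⟨key 0 (by omega), key 1 (by omega)⟩
    have hsurj : Function.Surjective φ := by
      rintro ⟨p, q⟩
      set v : Fin n → ℤ := fun m => if (m : ℕ) = 0 then p else if (m : ℕ) = 1 then q else 0
        with hv
      have hP : DnAux.Pfun n v 2 = 0 := by
        apply Finset.sum_eq_zero
        intro m hm
        simp only [Finset.mem_filter, Finset.mem_univ, true_and] at hm
        show (if (m : ℕ) = 0 then p else if (m : ℕ) = 1 then q else 0) = 0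
        rw [if_neg (by omega), if_neg (by omega)]
      refine ⟨v, ?_⟩
      rw [hφ_apply, DnAux.dot_aker hn 0 (by omega), DnAux.dot_aker hn 1 (by omega), hP]
      have hv0 : v ⟨0, by omega⟩ = p := by
        show (if (0 : ℕ) = 0 then p else if (0 : ℕ) = 1 then q else 0) = p
        norm_num
      have hv1 : v ⟨1, by omega⟩ = q := by
        show (if (1 : ℕ) = 0 then p else if (1 : ℕ) = 1 then q else 0) = q
        norm_num
      rw [hv0, hv1]
      simp
    exact ⟨((equiv0.trans (Submodule.quotEquivOfEq _ _ hker.symm)).trans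
      (φ.quotKerEquivOfSurjective hsurj)).toAddEquiv⟩
  · -- odd case
    intro hodd
    have hpar : n % 2 = 1 := Nat.odd_iff.mp hodd
    set ψ : (Fin n → ℤ) →ₗ[ℤ] ℤ := DnAux.dotL (DnAux.eker n) with hψ
    have hψ_apply : ∀ y : Fin n → ℤ, ψ y = dotProduct (DnAux.eker n) y := by
      intro y; rfl
    have hker : LinearMap.ker ψ = LinearMap.range (DnAux.S0 n).mulVecLin := by
      ext y
      simp only [LinearMap.mem_ker, LinearMap.mem_range, hψ_apply]
      rw [DnAux.dot_eker hn]
      constructor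
      · intro h
        refine ⟨DnAux.xsol hn y, ?_⟩
        rw [Matrix.mulVecLin_apply]
        exact DnAux.solve hn y (by linarith) (Or.inl hpar)
      · rintro ⟨x, rfl⟩
        rw [Matrix.mulVecLin_apply,
          DnAux.row0 _ ⟨0, by omega⟩ ⟨2, by omega⟩ rfl rfl,
          DnAux.row1 _ ⟨1, by omega⟩ ⟨2, by omega⟩ rfl rfl]
        ring
    have hsurj : Function.Surjective ψ := by
      intro p
      set v : Fin n → ℤ := fun m => if (m : ℕ) = 0 then p else 0 with hv
      refine ⟨v, ?_⟩
      rw [hψ_apply, DnAux.dot_eker hn]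
      have hv0 : v ⟨0, by omega⟩ = p := by
        show (if (0 : ℕ) = 0 then p else 0) = p
        norm_num
      have hv1 : v ⟨1, by omega⟩ = 0 := by
        show (if (1 : ℕ) = 0 then p else 0) = 0
        norm_num
      rw [hv0, hv1]
      ring
    exact ⟨((equiv0.trans (Submodule.quotEquivOfEq _ _ hker.symm)).trans
      (ψ.quotKerEquivOfSurjective hsurj)).toAddEquiv⟩
end

section
/- Let G be the abelian group generated by elements a, s_0, s_1, ..., s_t subject to the relations 2 s_0 = 0, 2a = Σ_{i=1}^t s_i, and s_0 = ((1 - (-1)^{p_i})/2) s_i for i = 1, ..., t, where p_1, ..., p_r are even and p_{r+1}, ..., p_t are odd. If r ≥ 1, then G is free abelian of rank r with basis a, s_2, ..., s_r. -/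
/-- Generators `a, s₀, s₁, …, s_t` of the free abelian group `ℤ^(t+2)`:
`a` is the 0-th standard basis vector and `sGen i` (for `i : Fin (t+1)`) is the
`(i+1)`-st standard basis vector, representing `s_i`. -/
abbrev aGen (t : ℕ) : Fin (t + 2) → ℤ := Pi.single 0 1

abbrev sGen (t : ℕ) (i : Fin (t + 1)) : Fin (t + 2) → ℤ := Pi.single i.succ 1

/-- The subgroup of relations: `2s₀`, `2a - ∑_{i=1}^t s_i`, and
`s₀ - ((1-(-1)^{p_i})/2)·s_i` for `i = 1, …, t` (the coefficient is `0` for `p_i`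
even and `1` for `p_i` odd). -/
abbrev relSub (t : ℕ) (p : Fin t → ℕ) : Submodule ℤ (Fin (t + 2) → ℤ) :=
  Submodule.span ℤ
    (insert ((2 : ℤ) • aGen t - ∑ i : Fin t, sGen t i.succ)
      (insert ((2 : ℤ) • sGen t 0)
        (Set.range fun i : Fin t =>
          sGen t 0 - (if Even (p i) then (0 : ℤ) else 1) • sGen t i.succ)))

/-- coefficient matrix of the projection map -/
def Fcoef (r k j : ℕ) : ℤ :=
  if k = 0 then (if j = 0 then 1 else 0)
  else if k = 2 then (if j = 0 then 2 else -1)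
  else if 3 ≤ k ∧ k ≤ r + 1 ∧ j = k - 2 then 1 else 0

def phiMap (t r : ℕ) : (Fin (t + 2) → ℤ) →ₗ[ℤ] (Fin r → ℤ) where
  toFun x := fun j => ∑ k : Fin (t + 2), Fcoef r k j * x k
  map_add' x y := by
    funext j
    simp [mul_add, Finset.sum_add_distrib]
  map_smul' c x := by
    funext j
    simp only [Pi.smul_apply, smul_eq_mul, RingHom.id_apply, Finset.mul_sum]
    exact Finset.sum_congr rfl fun k _ => by ring

lemma phi_single (t r : ℕ) (m : Fin (t + 2)) (c : ℤ) (j : Fin r) :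
    phiMap t r (Pi.single m c) j = Fcoef r (m : ℕ) (j : ℕ) * c := by
  simp only [phiMap, LinearMap.coe_mk, AddHom.coe_mk, Pi.single_apply, mul_ite, mul_zero,
    Finset.sum_ite_eq', Finset.mem_univ, if_true]

/-- helper: evaluate a sum over `range N` of an indicator-like function -/
lemma sum_eval (N c : ℕ) (v : ℤ) (f : ℕ → ℤ) (h : ∀ i < N, f i = if i = c then v else 0) :
    ∑ i ∈ Finset.range N, f i = if c < N then v else 0 := by
  rw [Finset.sum_congr rfl (fun i hi => h i (Finset.mem_range.mp hi)), Finset.sum_ite_eq']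
  simp [Finset.mem_range]

def gvec (t r : ℕ) (j : Fin r) : Fin (t + 2) → ℤ :=
  if (j : ℕ) = 0 then aGen t
  else sGen t ⟨min ((j : ℕ) + 1) t, Nat.lt_succ_of_le (min_le_right _ _)⟩

lemma gvec_apply (t r : ℕ) (hrt : r ≤ t) (j : Fin r) (n : Fin (t + 2)) :
    gvec t r j n = if (n : ℕ) = (if (j : ℕ) = 0 then 0 else (j : ℕ) + 2) then 1 else 0 := by
  have hj := j.isLt
  unfold gvec
  by_cases h0 : (j : ℕ) = 0
  · simp only [h0, if_true, aGen, Pi.single_apply, Fin.ext_iff, Fin.val_zero]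
  · rw [if_neg h0, if_neg h0]
    have hmin : min ((j : ℕ) + 1) t = (j : ℕ) + 1 := by omega
    simp [Pi.single_apply, Fin.ext_iff, hmin]

theorem rel_le_ker (t r : ℕ) (p : Fin t → ℕ) (hr : 1 ≤ r) (hrt : r ≤ t)
    (heven : ∀ i : Fin t, (i : ℕ) < r → Even (p i))
    (hodd : ∀ i : Fin t, r ≤ (i : ℕ) → Odd (p i)) :
    relSub t p ≤ LinearMap.ker (phiMap t r) := by
  rw [Submodule.span_le]
  intro x hx
  simp only [Set.mem_insert_iff, Set.mem_range] at hx
  rw [SetLike.mem_coe, LinearMap.mem_ker]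
  obtain rfl | rfl | ⟨i, rfl⟩ := hx
  · funext j
    have hj := j.isLt
    simp only [map_sub, map_smul, map_sum, Pi.sub_apply, Pi.smul_apply, Finset.sum_apply,
      smul_eq_mul, phi_single, Pi.zero_apply, Fin.val_zero]
    have hv : ∀ i : Fin t, ((i.succ.succ : Fin (t+2)) : ℕ) = (i : ℕ) + 2 := by
      intro i; simp [Fin.val_succ]
    simp only [hv]
    rw [Fin.sum_univ_eq_sum_range (fun i => Fcoef r (i + 2) (j : ℕ) * 1) t]
    by_cases h0 : (j : ℕ) = 0
    · rw [sum_eval t 0 2 _ (fun i hi => by simp only [Fcoef]; split_ifs <;> (try contradiction) <;> (try norm_num) <;> (try omega))]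
      simp only [Fcoef, h0, Fin.val_zero]
      split_ifs <;> (try contradiction) <;> (try norm_num) <;> (try omega)
    · have hsplit : ∀ i < t, Fcoef r (i + 2) (j : ℕ) * 1
          = (if i = 0 then (-1 : ℤ) else 0) + (if i = (j : ℕ) then 1 else 0) := by
        intro i hi
        simp only [Fcoef]
        split_ifs <;> (try contradiction) <;> (try norm_num) <;> (try omega)
      rw [Finset.sum_congr rfl (fun i hi => hsplit i (Finset.mem_range.mp hi)),
        Finset.sum_add_distrib, Finset.sum_ite_eq', Finset.sum_ite_eq']
      simp only [Finset.mem_range, Fcoef]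
      split_ifs <;> (try contradiction) <;> (try norm_num) <;> (try omega)
  · funext j
    have h1 : (((0 : Fin (t+1)).succ : Fin (t+2)) : ℕ) = 1 := rfl
    simp only [map_smul, Pi.smul_apply, smul_eq_mul, phi_single, Pi.zero_apply, h1]
    simp [Fcoef]
  · funext j
    have h1 : (((0 : Fin (t+1)).succ : Fin (t+2)) : ℕ) = 1 := rfl
    have hv : ((i.succ.succ : Fin (t+2)) : ℕ) = (i : ℕ) + 2 := by simp [Fin.val_succ]
    simp only [map_sub, map_smul, Pi.sub_apply, Pi.smul_apply, smul_eq_mul, phi_single,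
      Pi.zero_apply, h1, hv]
    rcases lt_or_ge (i : ℕ) r with h | h
    · rw [if_pos (heven i h)]
      simp only [Fcoef]
      split_ifs <;> (try contradiction) <;> (try norm_num) <;> (try omega)
    · rw [if_neg (Nat.not_even_iff_odd.mpr (hodd i h))]
      simp only [Fcoef]
      split_ifs <;> (try contradiction) <;> (try norm_num) <;> (try omega)

set_option maxHeartbeats 1000000 in
/-- If at least one weight is even (`p_1, …, p_r` even, `p_{r+1}, …, p_t` odd,
`r ≥ 1`), the group generated by `a, s₀, …, s_t` subject to the relations
`2s₀ = 0`, `2a = ∑ s_i`, `s₀ = ((1-(-1)^{p_i})/2) s_i` is free abelian of rank `r`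
with basis `a, s₂, …, s_r`. -/
theorem oGroth_even_weight_free (t r : ℕ) (p : Fin t → ℕ) (hr : 1 ≤ r) (hrt : r ≤ t)
    (heven : ∀ i : Fin t, (i : ℕ) < r → Even (p i))
    (hodd : ∀ i : Fin t, r ≤ (i : ℕ) → Odd (p i)) :
    ∃ bas : Module.Basis (Fin r) ℤ ((Fin (t + 2) → ℤ) ⧸ relSub t p),
      ∀ j : Fin r,
        bas j = Submodule.Quotient.mk
          (if (j : ℕ) = 0 then aGen t
           else sGen t ⟨(j : ℕ) + 1, by have := j.isLt; omega⟩) := by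
  classical
  have ht : 1 ≤ t := le_trans hr hrt
  have hker : relSub t p ≤ LinearMap.ker (phiMap t r) := rel_le_ker t r p hr hrt heven hodd
  -- membership facts
  have hR0 : (2:ℤ) • aGen t - ∑ i : Fin t, sGen t i.succ ∈ relSub t p :=
    Submodule.subset_span (Set.mem_insert _ _)
  have hs0 : sGen t 0 ∈ relSub t p := by
    have i0 : Fin t := ⟨0, by omega⟩
    have hmem : sGen t 0 - (if Even (p ⟨0, by omega⟩) then (0:ℤ) else 1) •
        sGen t (⟨0, by omega⟩ : Fin t).succ ∈ relSub t p := by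
      apply Submodule.subset_span
      simp only [Set.mem_insert_iff, Set.mem_range]
      exact Or.inr (Or.inr ⟨⟨0, by omega⟩, rfl⟩)
    rw [if_pos (heven ⟨0, by omega⟩ (by show 0 < r; omega))] at hmem
    simpa using hmem
  have hsm : ∀ i : Fin t, r ≤ (i : ℕ) → sGen t i.succ ∈ relSub t p := by
    intro i hi
    have hmem : sGen t 0 - (if Even (p i) then (0:ℤ) else 1) • sGen t i.succ ∈ relSub t p := by
      apply Submodule.subset_span
      simp only [Set.mem_insert_iff, Set.mem_range]
      exact Or.inr (Or.inr ⟨i, rfl⟩)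
    rw [if_neg (Nat.not_even_iff_odd.mpr (hodd i hi))] at hmem
    have := sub_mem hs0 hmem
    simpa using this
  -- coordinate formula for the candidate-preimage sums
  have hVal : ∀ (k n : Fin (t + 2)),
      (∑ j : Fin r, Fcoef r (k : ℕ) (j : ℕ) • gvec t r j) n
        = ∑ j ∈ Finset.range r,
            Fcoef r (k : ℕ) j * (if (n : ℕ) = (if j = 0 then 0 else j + 2) then 1 else 0) := by
    intro k n
    rw [Finset.sum_apply]
    simp only [Pi.smul_apply, smul_eq_mul, gvec_apply t r hrt]
    exact Fin.sum_univ_eq_sum_range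
      (fun j => Fcoef r (k : ℕ) j * (if (n : ℕ) = (if j = 0 then 0 else j + 2) then 1 else 0)) r
  have hsingle : ∀ (k n : Fin (t + 2)),
      (Pi.single k (1:ℤ) : Fin (t + 2) → ℤ) n = if (n : ℕ) = (k : ℕ) then 1 else 0 := by
    intro k n
    simp [Pi.single_apply, Fin.ext_iff]
  -- the key computation
  have key : ∀ k : Fin (t + 2),
      (∑ j : Fin r, Fcoef r (k : ℕ) (j : ℕ) • gvec t r j) - Pi.single k 1 ∈ relSub t p := by
    intro k
    have hk := k.isLt
    by_cases hk0 : (k : ℕ) = 0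
    · have hV : (∑ j : Fin r, Fcoef r (k : ℕ) (j : ℕ) • gvec t r j) = Pi.single k 1 := by
        funext n
        rw [hVal, hsingle, sum_eval r 0 (if (n : ℕ) = 0 then 1 else 0) _
          (by intro j hj; simp only [Fcoef, hk0]; split_ifs <;> (try contradiction) <;>
            (try norm_num) <;> (try omega))]
        split_ifs <;> omega
      rw [hV, sub_self]; exact zero_mem _
    · by_cases hk1 : (k : ℕ) = 1
      · have hV : (∑ j : Fin r, Fcoef r (k : ℕ) (j : ℕ) • gvec t r j) = 0 := by
          funext n
          rw [hVal, sum_eval r r 0 _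
            (by intro j hj; simp only [Fcoef, hk1]; split_ifs <;> (try contradiction) <;>
              (try norm_num) <;> (try omega))]
          simp
        rw [hV, zero_sub]
        have hk' : Pi.single k (1:ℤ) = sGen t 0 := by
          have hk'' : k = (0 : Fin (t + 1)).succ := Fin.ext (by simp [hk1])
          rw [hk'']
        rw [hk']
        exact neg_mem hs0
      · by_cases hk2 : (k : ℕ) = 2
        · have hid : (∑ j : Fin r, Fcoef r (k : ℕ) (j : ℕ) • gvec t r j) - Pi.single k 1
              = ((2:ℤ) • aGen t - ∑ i : Fin t, sGen t i.succ)
                + ∑ i ∈ Finset.filter (fun i : Fin t => r ≤ (i : ℕ)) Finset.univ,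
                    sGen t i.succ := by
            funext n
            have hn := n.isLt
            simp only [Pi.sub_apply, Pi.add_apply, Pi.smul_apply, smul_eq_mul,
              Finset.sum_filter, Finset.sum_apply, ite_apply, Pi.zero_apply, hVal, hsingle,
              Pi.single_apply, Fin.ext_iff, Fin.val_zero, Fin.val_succ]
            rw [Fin.sum_univ_eq_sum_range (fun i => if (n : ℕ) = i + 1 + 1 then (1:ℤ) else 0) t,
              Fin.sum_univ_eq_sum_range
                (fun i => if r ≤ i then (if (n : ℕ) = i + 1 + 1 then (1:ℤ) else 0) else 0) t]
            rw [sum_eval r (if (n : ℕ) = 0 then 0 else (n : ℕ) - 2)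
                (if (n : ℕ) = 0 then 2 else if 3 ≤ (n : ℕ) ∧ (n : ℕ) ≤ r + 1 then -1 else 0) _
                (by intro j hj; simp only [Fcoef, hk2]; split_ifs <;> (try contradiction) <;>
                  (try norm_num) <;> (try omega)),
              sum_eval t ((n : ℕ) - 2) (if 2 ≤ (n : ℕ) then 1 else 0) _
                (by intro i hi; split_ifs <;> (try contradiction) <;> (try norm_num) <;> (try omega)),
              sum_eval t ((n : ℕ) - 2) (if r + 2 ≤ (n : ℕ) then 1 else 0) _
                (by intro i hi; split_ifs <;> (try contradiction) <;> (try norm_num) <;> (try omega))]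
            split_ifs <;> omega
          rw [hid]
          refine add_mem hR0 (Submodule.sum_mem _ fun i hi => hsm i ?_)
          simpa using (Finset.mem_filter.mp hi).2
        · by_cases hk3 : (k : ℕ) ≤ r + 1
          · have hV : (∑ j : Fin r, Fcoef r (k : ℕ) (j : ℕ) • gvec t r j) = Pi.single k 1 := by
              funext n
              rw [hVal, hsingle, sum_eval r ((k : ℕ) - 2)
                (if (n : ℕ) = (k : ℕ) then 1 else 0) _
                (by intro j hj; simp only [Fcoef]; split_ifs <;> (try contradiction) <;>
                  (try norm_num) <;> (try omega))]
              split_ifs <;> omega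
            rw [hV, sub_self]; exact zero_mem _
          · have hV : (∑ j : Fin r, Fcoef r (k : ℕ) (j : ℕ) • gvec t r j) = 0 := by
              funext n
              rw [hVal, sum_eval r r 0 _
                (by intro j hj; simp only [Fcoef]; split_ifs <;> (try contradiction) <;>
                  (try norm_num) <;> (try omega))]
              simp
            rw [hV, zero_sub]
            have hk' : Pi.single k (1:ℤ) = sGen t (⟨(k : ℕ) - 2, by omega⟩ : Fin t).succ := by
              funext n
              simp only [sGen, Pi.single_apply, Fin.ext_iff, Fin.val_succ]
              split_ifs <;> simp_all <;> omega
            rw [hk']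
            exact neg_mem (hsm _ (by simp; omega))
  -- the two maps
  let φbar := (relSub t p).liftQ (phiMap t r) hker
  let ψ : (Fin r → ℤ) →ₗ[ℤ] ((Fin (t + 2) → ℤ) ⧸ relSub t p) :=
    Fintype.linearCombination ℤ (fun j => Submodule.Quotient.mk (gvec t r j))
  have hψsingle : ∀ j : Fin r, ψ (Pi.single j 1) = Submodule.Quotient.mk (gvec t r j) := by
    intro j
    simp only [ψ, Fintype.linearCombination_apply, Pi.single_apply, ite_smul, one_smul,
      zero_smul, Finset.sum_ite_eq', Finset.mem_univ, if_true]
  have hφψ : φbar.comp ψ = LinearMap.id := by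
    apply (Pi.basisFun ℤ (Fin r)).ext
    intro j
    have hj := j.isLt
    simp only [LinearMap.comp_apply, Pi.basisFun_apply, LinearMap.id_apply]
    rw [hψsingle j, Submodule.liftQ_apply]
    funext j'
    have hj' := j'.isLt
    by_cases h0 : (j : ℕ) = 0
    · rw [show gvec t r j = Pi.single (0 : Fin (t + 2)) 1 from by simp [gvec, h0]]
      rw [phi_single]
      simp only [Fcoef, Fin.val_zero, Pi.single_apply, Fin.ext_iff, h0]
      split_ifs <;> (try contradiction) <;> (try norm_num) <;> (try omega)
    · rw [show gvec t r j
          = Pi.single ((⟨min ((j : ℕ) + 1) t, Nat.lt_succ_of_le (min_le_right _ _)⟩ :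
              Fin (t + 1)).succ) 1 from by rw [gvec, if_neg h0]]
      rw [phi_single]
      simp only [Fcoef, Fin.val_succ, Pi.single_apply, Fin.ext_iff]
      split_ifs <;> (try contradiction) <;> (try norm_num) <;> (try omega)
  have hψφ : ψ.comp φbar = LinearMap.id := by
    apply Submodule.linearMap_qext
    apply (Pi.basisFun ℤ (Fin (t + 2))).ext
    intro k
    simp only [LinearMap.comp_apply, Pi.basisFun_apply, Submodule.mkQ_apply,
      LinearMap.id_apply, Submodule.liftQ_apply, φbar]
    have h1 : phiMap t r (Pi.single k 1) = fun j : Fin r => Fcoef r (k : ℕ) (j : ℕ) := by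
      funext j
      rw [phi_single, mul_one]
    rw [h1]
    have h2 : ψ (fun j => Fcoef r (k : ℕ) (j : ℕ))
        = Submodule.Quotient.mk (∑ j : Fin r, Fcoef r (k : ℕ) (j : ℕ) • gvec t r j) := by
      simp only [ψ, Fintype.linearCombination_apply, ← Submodule.mkQ_apply, ← map_smul,
        ← map_sum]
    rw [h2, Submodule.Quotient.eq]
    exact key k
  let e : (Fin r → ℤ) ≃ₗ[ℤ] ((Fin (t + 2) → ℤ) ⧸ relSub t p) :=
    LinearEquiv.ofLinear ψ φbar hψφ hφψ
  refine ⟨(Pi.basisFun ℤ (Fin r)).map e, fun j => ?_⟩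
  have hj := j.isLt
  rw [Module.Basis.map_apply, Pi.basisFun_apply]
  show ψ (Pi.single j 1) = _
  rw [hψsingle j]
  have hg : gvec t r j
      = (if (j : ℕ) = 0 then aGen t else sGen t ⟨(j : ℕ) + 1, by omega⟩) := by
    by_cases h0 : (j : ℕ) = 0
    · simp [gvec, h0]
    · simp only [gvec, if_neg h0]
      have hfin : (⟨min ((j : ℕ) + 1) t, Nat.lt_succ_of_le (min_le_right _ _)⟩ : Fin (t + 1))
          = ⟨(j : ℕ) + 1, by omega⟩ := Fin.ext (by simp; omega)
      rw [hfin]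
  rw [hg]
end

section
/- With K, C, Φ as above (C unimodular Gram matrix, Φ = -C^{-1}C^T), the map y ↦ ⟨y, -⟩ gives an isomorphism from the subgroup K^{⟨Φ⟩} := {y ∈ K : Φy = -y} onto the dual group Hom(coker(1+Φ), Z), yielding an exact sequence 0 → Hom(coker(1+Φ), Z) → K --(1+Φ)--> K → coker(1+Φ) → 0. -/
/-!
Write `S = 1 + Φ = 1 - C⁻¹Cᵀ`. Since `C` is unimodular, `y ↦ ⟨y, -⟩` is an isomorphism of `ℤⁿ`
onto its dual, and the dual of `coker S` is the annihilator of the image of `S`. The form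
`⟨y, -⟩` kills the image of `S` iff `yᵀ (C S) = 0`, while `S y = 0` iff `(C S) y = 0`; as
`C S = C - Cᵀ` is antisymmetric, these two conditions agree.
-/

namespace Matrix

variable {R ι : Type*} [CommRing R] [Fintype ι] [DecidableEq ι]

theorem mulVec_injective_of_isUnit_det {C : Matrix ι ι R} (hC : IsUnit C.det) :
    Function.Injective C.mulVec :=
  (C.toLinearEquiv' (C.invertibleOfIsUnitDet hC)).injective

noncomputable def formDualEquiv (C : Matrix ι ι R) (hC : IsUnit C.det) :
    (ι → R) ≃ₗ[R] Module.Dual R (ι → R) :=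
  (Cᵀ.toLinearEquiv' (Cᵀ.invertibleOfIsUnitDet (by rwa [det_transpose]))).trans
    (dotProductEquiv R ι)

theorem formDualEquiv_apply (C : Matrix ι ι R) (hC : IsUnit C.det) (y x : ι → R) :
    formDualEquiv C hC y x = y ⬝ᵥ C *ᵥ x := by
  rw [dotProduct_mulVec, ← mulVec_transpose]
  rfl

theorem formDualEquiv_mem_dualAnnihilator_range_iff (C : Matrix ι ι R) (hC : IsUnit C.det)
    (A : Matrix ι ι R) (y : ι → R) :
    formDualEquiv C hC y ∈ (LinearMap.range A.mulVecLin).dualAnnihilator ↔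
      y ᵥ* (C * A) = 0 := by
  simp only [Submodule.mem_dualAnnihilator, LinearMap.mem_range, forall_exists_index,
    forall_apply_eq_imp_iff, mulVecLin_apply, formDualEquiv_apply, vecMul_vecMul,
    dotProduct_mulVec, dotProduct_eq_zero_iff]

theorem mul_one_add_neg_inv_mul_transpose (C : Matrix ι ι R) (hC : IsUnit C.det) :
    C * (1 + -(C⁻¹ * Cᵀ)) = C - Cᵀ := by
  rw [mul_add, mul_one, mul_neg, ← mul_assoc, mul_nonsing_inv C hC, one_mul, sub_eq_add_neg]

theorem mem_ker_one_add_neg_inv_mul_transpose_iff (C : Matrix ι ι R) (hC : IsUnit C.det)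
    (y : ι → R) :
    y ∈ LinearMap.ker (1 + -(C⁻¹ * Cᵀ)).mulVecLin ↔ (C - Cᵀ) *ᵥ y = 0 := by
  rw [LinearMap.mem_ker, mulVecLin_apply, ← (mulVec_injective_of_isUnit_det hC).eq_iff,
    mulVec_mulVec, mul_one_add_neg_inv_mul_transpose C hC, mulVec_zero]

theorem map_formDualEquiv_ker_one_add_neg_inv_mul_transpose (C : Matrix ι ι R)
    (hC : IsUnit C.det) :
    (LinearMap.ker (1 + -(C⁻¹ * Cᵀ)).mulVecLin).map (formDualEquiv C hC).toLinearMap =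
      (LinearMap.range (1 + -(C⁻¹ * Cᵀ)).mulVecLin).dualAnnihilator := by
  ext f
  obtain ⟨y, rfl⟩ := (formDualEquiv C hC).surjective f
  have hskew : y ᵥ* (C - Cᵀ) = -((C - Cᵀ) *ᵥ y) := by
    rw [← mulVec_transpose, transpose_sub, transpose_transpose, ← neg_sub, neg_mulVec]
  rw [Submodule.mem_map_equiv, LinearEquiv.symm_apply_apply, formDualEquiv_mem_dualAnnihilator_range_iff,
    mem_ker_one_add_neg_inv_mul_transpose_iff C hC, mul_one_add_neg_inv_mul_transpose C hC,
    hskew, neg_eq_zero]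

noncomputable def kerEquivDualCoker (C : Matrix ι ι R) (hC : IsUnit C.det) :
    LinearMap.ker (1 + -(C⁻¹ * Cᵀ)).mulVecLin ≃ₗ[R]
      Module.Dual R ((ι → R) ⧸ LinearMap.range (1 + -(C⁻¹ * Cᵀ)).mulVecLin) :=
  ((formDualEquiv C hC).ofSubmodules _ _
    (map_formDualEquiv_ker_one_add_neg_inv_mul_transpose C hC)).trans
    (Submodule.dualQuotEquivDualAnnihilator _).symm

theorem kerEquivDualCoker_apply_mk (C : Matrix ι ι R) (hC : IsUnit C.det)
    (y : LinearMap.ker (1 + -(C⁻¹ * Cᵀ)).mulVecLin) (x : ι → R) :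
    kerEquivDualCoker C hC y (Submodule.Quotient.mk x) = (y : ι → R) ⬝ᵥ C *ᵥ x :=
  formDualEquiv_apply C hC y x

end Matrix

/-- Let `⟨x, y⟩ = xᵀ C y` with `C` unimodular and `Φ = -C⁻¹Cᵀ` the Coxeter matrix.
The map `y ↦ ⟨y, -⟩` gives an isomorphism from the subgroup
`{y : Φ y = -y} = ker(1 + Φ)` onto `Hom(coker(1 + Φ), ℤ)`, where the form `⟨y, -⟩`
descends to the quotient `coker(1 + Φ)`. -/
theorem fixed_subgroup_iso_dual_of_coker (n : ℕ) (C : Matrix (Fin n) (Fin n) ℤ)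
    (hC : C.det = 1 ∨ C.det = -1) :
    ∃ e : LinearMap.ker (Matrix.mulVecLin (1 + -(C⁻¹ * C.transpose))) ≃ₗ[ℤ]
        Module.Dual ℤ (cokerG (1 + -(C⁻¹ * C.transpose))),
      ∀ (y : LinearMap.ker (Matrix.mulVecLin (1 + -(C⁻¹ * C.transpose))))
        (x : Fin n → ℤ),
        e y (Submodule.Quotient.mk x) = dotProduct (y : Fin n → ℤ) (C.mulVec x) := by
  have hunit : IsUnit C.det := Int.isUnit_iff.mpr hC
  exact ⟨Matrix.kerEquivDualCoker C hunit, Matrix.kerEquivDualCoker_apply_mk C hunit⟩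
end

section
/- Let q ≥ 1 and consider the quotient group G = Z^{Z/q} / ⟨e_j + e_{j+1} : j ∈ Z/q⟩. If q is even then G is infinite cyclic generated by the image of e_0, and the linear form λ(x) = Σ_{j} (-1)^j x_j is well-defined on G with λ(e_0) = 1; if q is odd then G ≅ Z/2 and the mod-2 sum of coordinates Σ_j x_j mod 2 is a well-defined nonzero form on G. -/
/-!
Since `e_{j+1} ≡ -e_j`, the class of `e_j` is `(-1)^j e_0`, so the quotient is cyclic on `e_0`.
Going once around the cycle gives `e_0 ≡ (-1)^q e_0`: no relation when `q` is even, and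
`2 e_0 ≡ 0` when `q` is odd. A weight vector `w` with `w (j + 1) = -w j` induces a form
`x ↦ ∑ x_j w_j` on the quotient; the weights `(-1)^j` (for even `q`) and `1 ∈ ℤ/2` detect that
these are the only relations.
-/

/-- The subgroup of the free abelian group `ℤ^(ℤ/q)` generated by the elements
`e_j + e_{j+1}` for `j ∈ ℤ/q`. -/
abbrev tubeRel (q : ℕ) [NeZero q] : Submodule ℤ (ZMod q → ℤ) :=
  Submodule.span ℤ
    (Set.range fun j : ZMod q => (Pi.single j 1 : ZMod q → ℤ) + Pi.single (j + 1) 1)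

namespace tubeRel

variable {q : ℕ} [NeZero q]

local notation "ε" j => (Submodule.Quotient.mk (Pi.single j (1 : ℤ)) : (ZMod q → ℤ) ⧸ tubeRel q)

theorem mk_single_add_one (j : ZMod q) : (ε (j + 1)) = -(ε j) := by
  rw [eq_neg_iff_add_eq_zero, ← Submodule.Quotient.mk_add, add_comm,
    Submodule.Quotient.mk_eq_zero]
  exact Submodule.subset_span ⟨j, rfl⟩

theorem mk_single_natCast (n : ℕ) : (ε (n : ZMod q)) = (-1 : ℤ) ^ n • ε 0 := by
  induction n with
  | zero => simp
  | succ n ih => rw [Nat.cast_succ, mk_single_add_one, ih, pow_succ, mul_neg_one, neg_smul]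

theorem mk_eq_zsmul (x : ZMod q → ℤ) :
    Submodule.Quotient.mk x = (∑ j : ZMod q, (-1 : ℤ) ^ j.val * x j) • ε 0 := by
  conv_lhs => rw [← Finset.univ_sum_single x]
  rw [Finset.sum_smul, ← Submodule.mkQ_apply, map_sum]
  refine Finset.sum_congr rfl fun j _ => ?_
  have hj : (ε j) = (-1 : ℤ) ^ j.val • ε 0 := by
    simpa using mk_single_natCast (q := q) j.val
  have hsingle : Pi.single j (x j) = x j • (Pi.single j 1 : ZMod q → ℤ) := by
    rw [← Pi.single_smul', smul_eq_mul, mul_one]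
  rw [Submodule.mkQ_apply, hsingle, Submodule.Quotient.mk_smul, hj, smul_smul, mul_comm]

theorem exists_eq_zsmul (g : (ZMod q → ℤ) ⧸ tubeRel q) : ∃ k : ℤ, g = k • ε 0 := by
  obtain ⟨x, rfl⟩ := Submodule.Quotient.mk_surjective _ g
  exact ⟨_, mk_eq_zsmul x⟩

theorem two_zsmul_mk_single_zero (hq : Odd q) : (2 : ℤ) • (ε 0) = 0 := by
  have h := mk_single_natCast (q := q) q
  rw [ZMod.natCast_self, hq.neg_one_pow, neg_one_zsmul, eq_neg_iff_add_eq_zero] at h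
  rwa [two_smul]

section Form

variable {M : Type*} [AddCommGroup M] (w : ZMod q → M)

theorem le_ker_linearCombination (hw : ∀ j, w (j + 1) = -w j) :
    tubeRel q ≤ LinearMap.ker (Fintype.linearCombination ℤ w) := by
  rw [Submodule.span_le]
  rintro _ ⟨j, rfl⟩
  simp [hw]

def form (hw : ∀ j, w (j + 1) = -w j) : ((ZMod q → ℤ) ⧸ tubeRel q) →ₗ[ℤ] M :=
  (tubeRel q).liftQ _ (le_ker_linearCombination w hw)

variable {w}

@[simp]
theorem form_mk (hw : ∀ j, w (j + 1) = -w j) (x : ZMod q → ℤ) :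
    form w hw (Submodule.Quotient.mk x) = ∑ j, x j • w j :=
  rfl

theorem form_single (hw : ∀ j, w (j + 1) = -w j) (j : ZMod q) : form w hw (ε j) = w j := by
  simp

end Form

theorem neg_one_pow_val_add_one {R : Type*} [Ring R] (hq : Even q) (j : ZMod q) :
    (-1 : R) ^ (j + 1).val = -(-1) ^ j.val := by
  have hmod : ∀ m : ℕ, (-1 : R) ^ (m % q) = (-1) ^ m := fun m => by
    rw [neg_one_pow_eq_pow_mod_two, Nat.mod_mod_of_dvd _ (even_iff_two_dvd.mp hq),
      ← neg_one_pow_eq_pow_mod_two]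
  rw [ZMod.val_add, ZMod.val_one_eq_one_mod, hmod, pow_add, hmod, pow_one, mul_neg_one]

end tubeRel

/-- Let `G = ℤ^(ℤ/q) / ⟨e_j + e_{j+1}⟩`.  If `q` is even, `G` is infinite cyclic
generated by the image of `e_0`, and `λ(x) = ∑ (-1)^j x_j` is a well-defined form on
`G` with `λ(e_0) = 1`.  If `q` is odd, `G ≅ ℤ/2` and the mod-2 coordinate sum is a
well-defined nonzero form on `G`. -/
theorem cluster_tube_grothendieck_group (q : ℕ) [NeZero q] :
    (Even q →
      ∃ lam : ((ZMod q → ℤ) ⧸ tubeRel q) →+ ℤ,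
        (∀ x : ZMod q → ℤ,
          lam (Submodule.Quotient.mk x) = ∑ j : ZMod q, (-1 : ℤ) ^ j.val * x j) ∧
        lam (Submodule.Quotient.mk (Pi.single 0 1)) = 1 ∧
        (∀ g : (ZMod q → ℤ) ⧸ tubeRel q,
          ∃ k : ℤ, g = k • Submodule.Quotient.mk (Pi.single (0 : ZMod q) (1 : ℤ))) ∧
        Function.Injective fun k : ℤ =>
          k • (Submodule.Quotient.mk (Pi.single (0 : ZMod q) (1 : ℤ)) :
            (ZMod q → ℤ) ⧸ tubeRel q)) ∧
    (Odd q →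
      Nonempty (((ZMod q → ℤ) ⧸ tubeRel q) ≃+ ZMod 2) ∧
      ∃ mu : ((ZMod q → ℤ) ⧸ tubeRel q) →+ ZMod 2,
        (∀ x : ZMod q → ℤ,
          mu (Submodule.Quotient.mk x) = ∑ j : ZMod q, ((x j : ℤ) : ZMod 2)) ∧
        mu ≠ 0) := by
  refine ⟨fun hq => ?_, fun hq => ?_⟩
  · set lam :=
      tubeRel.form (fun j : ZMod q => (-1 : ℤ) ^ j.val) (tubeRel.neg_one_pow_val_add_one hq)
    have lam_e0 : lam (Submodule.Quotient.mk (Pi.single 0 1)) = 1 :=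
      (tubeRel.form_single _ 0).trans (by simp)
    refine ⟨lam.toAddMonoidHom, fun x => ?_, lam_e0, tubeRel.exists_eq_zsmul, fun a b hab => ?_⟩
    · simp [lam, mul_comm]
    · simpa [lam_e0] using congrArg lam hab
  · set mu := tubeRel.form (fun _ : ZMod q => (1 : ZMod 2)) (fun _ => by decide)
    have mu_e0 : mu (Submodule.Quotient.mk (Pi.single 0 1)) = 1 := tubeRel.form_single _ 0
    have mu_bij : Function.Bijective mu := by
      refine ⟨(injective_iff_map_eq_zero mu).mpr fun g hg => ?_, fun a => ?_⟩
      · obtain ⟨k, rfl⟩ := tubeRel.exists_eq_zsmul g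
        rw [map_zsmul, mu_e0, zsmul_one, ZMod.intCast_zmod_eq_zero_iff_dvd] at hg
        obtain ⟨m, rfl⟩ := hg
        rw [mul_comm, mul_smul, Nat.cast_ofNat, tubeRel.two_zsmul_mk_single_zero hq, smul_zero]
      · obtain ⟨k, rfl⟩ := ZMod.intCast_surjective a
        exact ⟨k • Submodule.Quotient.mk (Pi.single 0 1), by rw [map_zsmul, mu_e0, zsmul_one]⟩
    refine ⟨⟨AddEquiv.ofBijective mu.toAddMonoidHom mu_bij⟩, mu.toAddMonoidHom,
      fun x => by simp [mu], fun h => ?_⟩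
    simpa [mu_e0] using DFunLike.congr_fun h (Submodule.Quotient.mk (Pi.single 0 1))
end
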